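/- arXiv:2603.29516 — 8 statements merged into one kernel-verified Lean document; each statement's English description precedes it below -/
import Mathlib

section
/- Let G be a simple graph on [n], m ≥ 2, and let {k,l} be a non-edge of G such that there exists a path k, k_1, …, k_s, l in G from k to l. Then for any indices i_1, …, i_s ∈ [m] and any 1 ≤ i < j ≤ m, the product x_{i_1,k_1} x_{i_2,k_2} ⋯ x_{i_s,k_s} · (x_{i,k}x_{j,l} − x_{i,l}x_{j,k}) lies in the generalized binomial edge ideal J_{K_m,G}. -/
/-! Induct on the length of the path. If `p` is its last inner vertex, with row index `q`, the
relation `x_{q,p} [ab|kl] = x_{a,l} [qb|kp] - x_{b,l} [qa|kp] + x_{q,k} [ab|pl]` among 2-minors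
(`[ab|kl]` being `minor K a b k l`) expresses `x_{q,p} [ab|kl]` through minors on the columns
`k, p`, which the shorter path handles, and a minor on the edge `{p,l}`. -/

open MvPolynomial

noncomputable def minor (K : Type*) [Field K] (i j k l : ℕ) : MvPolynomial (ℕ × ℕ) K :=
  X (i, k) * X (j, l) - X (i, l) * X (j, k)

noncomputable def genBEI (K : Type*) [Field K] (m : ℕ) (G : SimpleGraph ℕ) :
    Ideal (MvPolynomial (ℕ × ℕ) K) :=
  Ideal.span {f | ∃ i j k l : ℕ, 1 ≤ i ∧ i < j ∧ j ≤ m ∧ k < l ∧ G.Adj k l ∧ f = minor K i j k l}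

section

variable (K : Type*) [Field K]

theorem minor_swap_rows (a b k l : ℕ) : minor K b a k l = -minor K a b k l := by
  unfold minor; ring

theorem minor_swap_cols (a b k l : ℕ) : minor K a b l k = -minor K a b k l := by
  unfold minor; ring

theorem minor_self_rows (a k l : ℕ) : minor K a a k l = 0 := by
  unfold minor; ring

theorem X_mul_minor_eq (a b q k p l : ℕ) :
    X (q, p) * minor K a b k l =
      X (a, l) * minor K q b k p - X (b, l) * minor K q a k p + X (q, k) * minor K a b p l := by
  unfold minor; ring

variable {K} {m : ℕ} {G : SimpleGraph ℕ}

theorem minor_mem_genBEI_of_lt_of_adj {a b k l : ℕ} (ha : 1 ≤ a) (hab : a < b) (hbm : b ≤ m)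
    (hkl : G.Adj k l) : minor K a b k l ∈ genBEI K m G := by
  rcases lt_or_gt_of_ne hkl.ne with hlt | hgt
  · exact Ideal.subset_span ⟨a, b, k, l, ha, hab, hbm, hlt, hkl, rfl⟩
  · rw [← neg_neg (minor K a b k l), ← minor_swap_cols]
    exact neg_mem (Ideal.subset_span ⟨a, b, l, k, ha, hab, hbm, hgt, hkl.symm, rfl⟩)

theorem minor_mem_genBEI_of_adj {a b k l : ℕ} (ha : a ∈ Set.Icc 1 m) (hb : b ∈ Set.Icc 1 m)
    (hkl : G.Adj k l) : minor K a b k l ∈ genBEI K m G := by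
  rcases lt_trichotomy a b with hab | rfl | hba
  · exact minor_mem_genBEI_of_lt_of_adj ha.1 hab hb.2 hkl
  · rw [minor_self_rows]
    exact zero_mem _
  · rw [minor_swap_rows]
    exact neg_mem (minor_mem_genBEI_of_lt_of_adj hb.1 hba ha.2 hkl)

theorem prod_mul_minor_mem_genBEI_of_path {s k : ℕ} {c iseq : ℕ → ℕ} (hc0 : c 0 = k)
    (hpath : ∀ t, t ≤ s → G.Adj (c t) (c (t + 1)))
    (hiseq : ∀ t, 1 ≤ t → t ≤ s → iseq t ∈ Set.Icc 1 m)
    {a b : ℕ} (ha : a ∈ Set.Icc 1 m) (hb : b ∈ Set.Icc 1 m) :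
    (∏ t ∈ Finset.Icc 1 s, X (iseq t, c t)) * minor K a b k (c (s + 1)) ∈ genBEI K m G := by
  induction s generalizing a b with
  | zero =>
    simpa [← hc0] using minor_mem_genBEI_of_adj ha hb (hpath 0 le_rfl)
  | succ s ih =>
    have hpath' : ∀ t, t ≤ s → G.Adj (c t) (c (t + 1)) := fun t ht => hpath t (by omega)
    have hiseq' : ∀ t, 1 ≤ t → t ≤ s → iseq t ∈ Set.Icc 1 m :=
      fun t h1 h2 => hiseq t h1 (by omega)
    have hq : iseq (s + 1) ∈ Set.Icc 1 m := hiseq (s + 1) (by omega) le_rfl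
    set P := ∏ t ∈ Finset.Icc 1 s, (X (iseq t, c t) : MvPolynomial (ℕ × ℕ) K)
    have hsplit : (∏ t ∈ Finset.Icc 1 (s + 1), X (iseq t, c t)) * minor K a b k (c (s + 2)) =
        X (a, c (s + 2)) * (P * minor K (iseq (s + 1)) b k (c (s + 1)))
          - X (b, c (s + 2)) * (P * minor K (iseq (s + 1)) a k (c (s + 1)))
          + X (iseq (s + 1), k) * P * minor K a b (c (s + 1)) (c (s + 2)) := by
      rw [Finset.prod_Icc_succ_top (by omega), mul_assoc, X_mul_minor_eq K a b _ k]
      ring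
    rw [hsplit]
    refine add_mem (sub_mem ?_ ?_) (Ideal.mul_mem_left _ _ ?_)
    · exact Ideal.mul_mem_left _ _ (ih hpath' hiseq' hq hb)
    · exact Ideal.mul_mem_left _ _ (ih hpath' hiseq' hq ha)
    · exact minor_mem_genBEI_of_adj ha hb (hpath (s + 1) le_rfl)

end

theorem prod_mul_minor_mem_genBEI_general
    (K : Type*) [Field K] (m : ℕ)
    (G : SimpleGraph ℕ)
    (k l : ℕ)
    (s : ℕ) (c : ℕ → ℕ) (hc0 : c 0 = k) (hcs : c (s + 1) = l)
    (hpath : ∀ t : ℕ, t ≤ s → G.Adj (c t) (c (t + 1)))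
    (iseq : ℕ → ℕ) (hiseq : ∀ t : ℕ, 1 ≤ t → t ≤ s → iseq t ∈ Set.Icc 1 m)
    (i j : ℕ) (hi : 1 ≤ i) (hij : i < j) (hjm : j ≤ m) :
    (∏ t ∈ Finset.Icc 1 s, X (iseq t, c t)) * minor K i j k l ∈ genBEI K m G := by
  rw [← hcs]
  exact prod_mul_minor_mem_genBEI_of_path hc0 hpath hiseq ⟨hi, by omega⟩ ⟨by omega, hjm⟩

/-- Corollary 3.2: if `{k,l}` is a non-edge of `G` joined by a path
`k, c 1, …, c s, l` in `G`, then for any row indices `i₁,…,i_s ∈ [m]` and any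
`1 ≤ i < j ≤ m`, the product `x_{i₁,k₁} ⋯ x_{i_s,k_s} · (x_{i,k}x_{j,l} − x_{i,l}x_{j,k})`
lies in `J_{K_m,G}`. -/
theorem prod_mul_minor_mem_genBEI
    (K : Type*) [Field K] (m n : ℕ) (hm : 2 ≤ m)
    (G : SimpleGraph ℕ)
    (hGrange : ∀ u v : ℕ, G.Adj u v → u ∈ Set.Icc 1 n ∧ v ∈ Set.Icc 1 n)
    (k l : ℕ) (hkl : k ≠ l) (hnonedge : ¬ G.Adj k l)
    (s : ℕ) (c : ℕ → ℕ) (hc0 : c 0 = k) (hcs : c (s + 1) = l)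
    (hpath : ∀ t : ℕ, t ≤ s → G.Adj (c t) (c (t + 1)))
    (iseq : ℕ → ℕ) (hiseq : ∀ t : ℕ, 1 ≤ t → t ≤ s → iseq t ∈ Set.Icc 1 m)
    (i j : ℕ) (hi : 1 ≤ i) (hij : i < j) (hjm : j ≤ m) :
    (∏ t ∈ Finset.Icc 1 s, X (iseq t, c t)) * minor K i j k l ∈ genBEI K m G :=
  prod_mul_minor_mem_genBEI_general K m G k l s c hc0 hcs hpath iseq hiseq i j hi hij hjm
end

section
/- Let G be a connected closed graph whose clique complex has facets F_i = [a_i, b_i] for i = 1, …, t with 1 = a_1 < a_2 < ⋯ < a_t and b_t = n. Define vertices by c_0 = 1, c_1 = b_1, and iteratively c_{i+1} = max{ max(F_k) : c_i ∈ F_k } whenever c_i ≠ n, terminating at c_{d+1} = n. Then the set {c_1, …, c_d} is a reduced connected dominating set of G of minimum cardinality; that is, d equals the reduced connected domination number γ_c*(G). -/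
/-- `G` (on the vertex labels `1,…,n`) is closed with respect to the given labeling:
for all `i < j < k`, if `{i,k}` is an edge then so are `{i,j}` and `{j,k}`. -/
def IsClosedGraph (G : SimpleGraph ℕ) : Prop :=
  ∀ i j k : ℕ, i < j → j < k → G.Adj i k → G.Adj i j ∧ G.Adj j k

/-- `D` is a reduced connected dominating set of `G` (with vertex set `[1,n]`):
`D ⊆ [1,n]`, the induced subgraph on `D` is connected (or `D = ∅`), and any two
vertices `u, v` outside `D` are joined by a walk all of whose internal vertices
lie in `D`. -/
def IsRCDS (n : ℕ) (G : SimpleGraph ℕ) (D : Set ℕ) : Prop :=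
  D ⊆ Set.Icc 1 n ∧
  (D = ∅ ∨ (G.induce D).Connected) ∧
  ∀ u ∈ Set.Icc 1 n \ D, ∀ v ∈ Set.Icc 1 n \ D,
    ∃ p : G.Walk u v, ∀ w ∈ p.support, w = u ∨ w = v ∨ w ∈ D


/-!
The greedy vertices cut `[1, n]` into blocks `(c (i - 1), c i]`; the level of `x` is the index of
its block. As `c (i - 1)` and `c i` are adjacent and `G` is closed, `[c (i - 1), c i]` is a clique,
and closedness together with the maximality of `c (i + 1)` shows that an edge raises the level by
at most one. The cliques let every vertex reach every later vertex through the path `c 1, …, c d`.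
Conversely, if `D` is a reduced connected dominating set and `u ≤ v` are the least and the
greatest vertex outside `D`, then `D` contains everything below `u` and above `v`, and a walk from
`u` to `v` through `D` visits each level strictly between those of `u` and `v` at a vertex of `D`
strictly between `u` and `v`; counting these vertices gives `d ≤ |D|`.
-/

open Set SimpleGraph

namespace SimpleGraph

variable {V : Type*} {G : SimpleGraph V}

def JoinedVia (G : SimpleGraph V) (D : Set V) (u v : V) : Prop :=
  ∃ p : G.Walk u v, ∀ w ∈ p.support, w = u ∨ w = v ∨ w ∈ D

namespace JoinedVia

variable {D : Set V} {u v w : V}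

theorem refl (D : Set V) (u : V) : G.JoinedVia D u u :=
  ⟨.nil, by simp⟩

theorem of_adj (D : Set V) (h : G.Adj u v) : G.JoinedVia D u v :=
  ⟨h.toWalk, by simp⟩

theorem symm (h : G.JoinedVia D u v) : G.JoinedVia D v u := by
  obtain ⟨p, hp⟩ := h
  refine ⟨p.reverse, fun x hx => ?_⟩
  rw [Walk.support_reverse, List.mem_reverse] at hx
  rcases hp x hx with hx | hx | hx <;> simp [hx]

theorem concat (h : G.JoinedVia D u v) (hvw : G.Adj v w) (hv : v = u ∨ v ∈ D) :
    G.JoinedVia D u w := by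
  obtain ⟨p, hp⟩ := h
  refine ⟨p.concat hvw, fun x hx => ?_⟩
  rw [Walk.support_concat, List.mem_append, List.mem_singleton] at hx
  rcases hx with hx | rfl
  · rcases hp x hx with rfl | rfl | hx <;> tauto
  · tauto

end JoinedVia

theorem Walk.exists_mem_support_apply_eq (f : V → ℕ) (hf : ∀ x y, G.Adj x y → f y ≤ f x + 1)
    {a b : V} (p : G.Walk a b) {L : ℕ} (haL : f a < L) (hLb : L ≤ f b) :
    ∃ w ∈ p.support, f w = L := by
  induction p with
  | nil => omega
  | @cons a a' b h q ih =>
    by_cases hL : L ≤ f a'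
    · exact ⟨a', by simp, by have := hf a a' h; omega⟩
    · obtain ⟨w, hw, rfl⟩ := ih (by omega) hLb
      exact ⟨w, by simp [hw], rfl⟩

theorem connected_induce_image_Icc {f : ℕ → V} {a b : ℕ} (hab : a ≤ b)
    (hf : ∀ i, a ≤ i → i < b → G.Adj (f i) (f (i + 1))) :
    (G.induce (f '' Icc a b)).Connected := by
  rw [connected_iff_exists_forall_reachable]
  refine ⟨⟨f a, mem_image_of_mem f ⟨le_rfl, hab⟩⟩, ?_⟩
  rintro ⟨_, i, ⟨hai, hib⟩, rfl⟩
  induction i, hai using Nat.le_induction with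
  | base => rfl
  | succ i hai ih =>
    exact (ih (by omega)).trans (Adj.reachable (G := G.induce _) (hf i hai (by omega)))

end SimpleGraph

theorem IsClosedGraph.isClique_Icc {G : SimpleGraph ℕ} (hG : IsClosedGraph G) {a b : ℕ}
    (hab : G.Adj a b) : G.IsClique (Icc a b) := by
  have key : ∀ x y, a ≤ x → x < y → y ≤ b → G.Adj x y := by
    intro x y hax hxy hyb
    have hxb : G.Adj x b := by
      rcases hax.eq_or_lt with rfl | hax
      · exact hab
      · exact (hG a x b hax (hxy.trans_le hyb) hab).2
    rcases hyb.eq_or_lt with rfl | hyb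
    · exact hxb
    · exact (hG x y b hxy hyb hxb).1
  intro x hx y hy hne
  rcases hne.lt_or_gt with hxy | hyx
  · exact key x y hx.1 hxy hy.2
  · exact (key y x hy.1 hyx hx.2).symm

structure IsGreedySeq (G : SimpleGraph ℕ) (n : ℕ) (c : ℕ → ℕ) (d : ℕ) : Prop where
  zero : c 0 = 1
  isGreatest : ∀ i ≤ d, IsGreatest {v | v = c i ∨ G.Adj (c i) v} (c (i + 1))
  last : c (d + 1) = n
  ne_last : ∀ i ≤ d, c i ≠ n

/-- The index `i` of the block `(c (i - 1), c i]` containing `x`. -/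
noncomputable def greedyLevel (c : ℕ → ℕ) (x : ℕ) : ℕ :=
  sInf {i | x ≤ c i}

theorem greedyLevel_le {c : ℕ → ℕ} {x i : ℕ} (hx : x ≤ c i) : greedyLevel c x ≤ i :=
  Nat.sInf_le hx

theorem apply_lt_of_lt_greedyLevel {c : ℕ → ℕ} {x i : ℕ} (hi : i < greedyLevel c x) : c i < x :=
  not_le.mp (Nat.notMem_of_lt_sInf (s := {i | x ≤ c i}) hi)

namespace IsGreedySeq

variable {G : SimpleGraph ℕ} {n d : ℕ} {c : ℕ → ℕ} (h : IsGreedySeq G n c d)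
include h

theorem lt_succ {i : ℕ} (hi : i ≤ d) : c i < c (i + 1) := by
  refine ((h.isGreatest i hi).2 (Or.inl rfl)).lt_of_ne fun heq => h.ne_last i hi ?_
  -- a repeated value is its own greatest neighbour, so the sequence stays constant
  have hconst : ∀ j, i ≤ j → j ≤ d + 1 → c j = c i := by
    intro j hij
    induction j, hij using Nat.le_induction with
    | base => exact fun _ => rfl
    | succ j hij ih =>
      intro hj
      have hgj := h.isGreatest j (by omega)
      rw [ih (by omega)] at hgj
      exact hgj.unique (heq ▸ h.isGreatest i hi)
  rw [← hconst (d + 1) (by omega) le_rfl, h.last]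

theorem add_sub_le {i j : ℕ} (hij : i ≤ j) (hj : j ≤ d + 1) : c i + (j - i) ≤ c j := by
  induction j, hij using Nat.le_induction with
  | base => simp
  | succ j hij ih =>
    have := h.lt_succ (i := j) (by omega)
    have := ih (by omega)
    omega

theorem strictMonoOn : StrictMonoOn c (Iic (d + 1)) := fun i _ j hj hij => by
  have := h.add_sub_le hij.le hj
  omega

theorem lt_apply {i : ℕ} (hi : i ≤ d + 1) : i < c i := by
  have := h.add_sub_le (Nat.zero_le i) hi
  rw [h.zero] at this
  omega

theorem apply_le {i : ℕ} (hi : i ≤ d + 1) : c i ≤ n :=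
  h.last ▸ h.strictMonoOn.monotoneOn hi self_mem_Iic hi

theorem adj {i : ℕ} (hi : i ≤ d) : G.Adj (c i) (c (i + 1)) :=
  (h.isGreatest i hi).1.resolve_left (h.lt_succ hi).ne'

theorem image_subset_Icc : c '' Icc 1 d ⊆ Icc 1 n := by
  rintro _ ⟨i, ⟨hi1, hid⟩, rfl⟩
  exact ⟨by have := h.lt_apply (i := i) (by omega); omega, h.apply_le (by omega)⟩

theorem ncard_image : (c '' Icc 1 d).ncard = d := by
  rw [(h.strictMonoOn.injOn.mono fun _ hi => Nat.le_succ_of_le hi.2).ncard_image, ncard_Icc_nat,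
    Nat.add_sub_cancel]

theorem le_apply_greedyLevel {x : ℕ} (hx : x ≤ n) : x ≤ c (greedyLevel c x) :=
  Nat.sInf_mem (s := {i | x ≤ c i}) ⟨d + 1, by simpa [h.last]⟩

theorem greedyLevel_le_succ {x : ℕ} (hx : x ≤ n) : greedyLevel c x ≤ d + 1 :=
  greedyLevel_le (h.last ▸ hx)

theorem greedyLevel_mono {x y : ℕ} (hxy : x ≤ y) (hy : y ≤ n) :
    greedyLevel c x ≤ greedyLevel c y :=
  greedyLevel_le (hxy.trans (h.le_apply_greedyLevel hy))

theorem greedyLevel_lt_self {x : ℕ} (hx1 : 1 ≤ x) (hx : x ≤ n) : greedyLevel c x < x := by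
  rcases le_or_gt x (d + 2) with hxd | hxd
  · have hx' : x ≤ c (x - 1) := by
      have := h.lt_apply (i := x - 1) (by omega)
      omega
    have := greedyLevel_le hx'
    omega
  · have := h.greedyLevel_le_succ hx
    omega

theorem le_greedyLevel_add {x : ℕ} (hx : x ≤ n) : d + 1 + x ≤ greedyLevel c x + n := by
  have hL := h.greedyLevel_le_succ hx
  have hLn := h.add_sub_le hL le_rfl
  rw [h.last] at hLn
  have := h.le_apply_greedyLevel hx
  omega

theorem greedyLevel_le_of_adj (hG : IsClosedGraph G) {x y : ℕ} (hxy : G.Adj x y) (hx : x ≤ n)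
    (hy : y ≤ n) : greedyLevel c y ≤ greedyLevel c x + 1 := by
  set L := greedyLevel c x
  rcases le_or_gt L d with hL | hL
  · rcases le_or_gt y (c L) with hyL | hyL
    · exact (greedyLevel_le hyL).trans (Nat.le_succ L)
    · have hxL := h.le_apply_greedyLevel hx
      have hLy : G.Adj (c L) y :=
        hG.isClique_Icc hxy ⟨hxL, hyL.le⟩ ⟨hxL.trans hyL.le, le_rfl⟩ hyL.ne
      exact greedyLevel_le ((h.isGreatest L hL).2 (Or.inr hLy))
  · have := h.greedyLevel_le_succ hy
    omega

theorem isClique_Icc_apply (hG : IsClosedGraph G) {i : ℕ} (hi : i ≤ d) :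
    G.IsClique (Icc (c i) (c (i + 1))) :=
  hG.isClique_Icc (h.adj hi)

theorem exists_greedyLevel_eq_succ {x : ℕ} (hx : x ≤ n) (hL : 0 < greedyLevel c x) :
    ∃ i ≤ d, greedyLevel c x = i + 1 ∧ c i < x ∧ x ≤ c (i + 1) := by
  have := h.greedyLevel_le_succ hx
  refine ⟨greedyLevel c x - 1, by omega, by omega, apply_lt_of_lt_greedyLevel (by omega), ?_⟩
  rw [Nat.sub_add_cancel hL]
  exact h.le_apply_greedyLevel hx

theorem eq_or_adj_apply_greedyLevel (hG : IsClosedGraph G) {x : ℕ} (hx1 : 1 ≤ x) (hx : x ≤ n) :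
    x = c (greedyLevel c x) ∨ G.Adj x (c (greedyLevel c x)) := by
  rcases Nat.eq_zero_or_pos (greedyLevel c x) with h0 | hL
  · have := h.le_apply_greedyLevel hx
    rw [h0, h.zero] at this ⊢
    exact Or.inl (by omega)
  · obtain ⟨i, hid, hLi, hix, hxi⟩ := h.exists_greedyLevel_eq_succ hx hL
    rw [hLi]
    rcases hxi.eq_or_lt with heq | hlt
    · exact Or.inl heq
    · exact Or.inr (h.isClique_Icc_apply hG hid ⟨hix.le, hxi⟩ ⟨(h.lt_succ hid).le, le_rfl⟩ hlt.ne)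

theorem adj_of_greedyLevel_eq (hG : IsClosedGraph G) {u v : ℕ} (hu : 1 ≤ u) (huv : u < v)
    (hv : v ≤ n) (heq : greedyLevel c u = greedyLevel c v) : G.Adj u v := by
  rcases Nat.eq_zero_or_pos (greedyLevel c v) with h0 | hL
  · have := h.le_apply_greedyLevel hv
    rw [h0, h.zero] at this
    omega
  · obtain ⟨i, hid, hLi, hiv, hvi⟩ := h.exists_greedyLevel_eq_succ hv hL
    have hiu : c i < u := apply_lt_of_lt_greedyLevel (by omega)
    exact h.isClique_Icc_apply hG hid ⟨hiu.le, huv.le.trans hvi⟩ ⟨hiv.le, hvi⟩ huv.ne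

theorem joinedVia_of_lt (hG : IsClosedGraph G) {u v : ℕ} (hu : 1 ≤ u) (huv : u < v) (hv : v ≤ n) :
    G.JoinedVia (c '' Icc 1 d) u v := by
  have hun : u ≤ n := huv.le.trans hv
  have hstart : ∀ k ≤ d, greedyLevel c u ≤ k → c k = u ∨ c k ∈ c '' Icc 1 d := by
    intro k hk hLk
    rcases Nat.eq_zero_or_pos k with rfl | hk0
    · have := h.le_apply_greedyLevel hun
      rw [Nat.le_zero.mp hLk, h.zero] at this
      rw [h.zero]
      exact Or.inl (by omega)
    · exact Or.inr ⟨k, ⟨hk0, hk⟩, rfl⟩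
  have hreach : ∀ k, greedyLevel c u ≤ k → k ≤ d + 1 → G.JoinedVia (c '' Icc 1 d) u (c k) := by
    intro k hk
    induction k, hk using Nat.le_induction with
    | base =>
      intro _
      rcases h.eq_or_adj_apply_greedyLevel hG hu hun with heq | hadj
      · exact heq ▸ JoinedVia.refl _ _
      · exact JoinedVia.of_adj _ hadj
    | succ k hk ih =>
      intro hkd
      exact (ih (by omega)).concat (h.adj (by omega)) (hstart k (by omega) hk)
  rcases (h.greedyLevel_mono huv.le hv).eq_or_lt with heq | hlt
  · exact JoinedVia.of_adj _ (h.adj_of_greedyLevel_eq hG hu huv hv heq)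
  · obtain ⟨i, hid, hLi, hiv, hvi⟩ := h.exists_greedyLevel_eq_succ hv (by omega)
    have hadj : G.Adj (c i) v :=
      h.isClique_Icc_apply hG hid ⟨le_rfl, (h.lt_succ hid).le⟩ ⟨hiv.le, hvi⟩ hiv.ne
    exact (hreach i (by omega) (by omega)).concat hadj (hstart i hid (by omega))

theorem isRCDS (hG : IsClosedGraph G) : IsRCDS n G (c '' Icc 1 d) := by
  refine ⟨h.image_subset_Icc, ?_, fun u hu v hv => ?_⟩
  · rcases Nat.eq_zero_or_pos d with rfl | hd
    · left
      simp
    · exact Or.inr (connected_induce_image_Icc hd fun i hi _ => h.adj (by omega))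
  · rcases lt_trichotomy u v with huv | rfl | hvu
    · exact h.joinedVia_of_lt hG hu.1.1 huv hv.1.2
    · exact JoinedVia.refl _ _
    · exact (h.joinedVia_of_lt hG hv.1.1 hvu hu.1.2).symm

theorem le_ncard_inter_Ioo (hG : IsClosedGraph G) (hbound : ∀ x y, G.Adj x y → y ≤ n)
    {D : Set ℕ} (hD : IsRCDS n G D) {u v : ℕ} (hu : u ∈ Icc 1 n \ D) (hv : v ∈ Icc 1 n \ D) :
    greedyLevel c v - greedyLevel c u - 1 ≤ (D ∩ Ioo u v).ncard := by
  obtain ⟨p, hp⟩ := hD.2.2 u hu v hv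
  have hsub : Ioo (greedyLevel c u) (greedyLevel c v) ⊆ greedyLevel c '' (D ∩ Ioo u v) := by
    rintro L ⟨huL, hLv⟩
    obtain ⟨w, hw, rfl⟩ := p.exists_mem_support_apply_eq (greedyLevel c)
      (fun x y hxy => h.greedyLevel_le_of_adj hG hxy (hbound y x hxy.symm) (hbound x y hxy))
      huL hLv.le
    rcases hp w hw with rfl | rfl | hwD
    · omega
    · omega
    · refine ⟨w, ⟨hwD, ?_, ?_⟩, rfl⟩
      · by_contra! hwu
        have := h.greedyLevel_mono hwu hu.1.2
        omega
      · by_contra! hvw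
        have := h.greedyLevel_mono hvw (hD.1 hwD).2
        omega
  have hfin : (D ∩ Ioo u v).Finite := (finite_Ioo u v).inter_of_right D
  calc greedyLevel c v - greedyLevel c u - 1
      = (Ioo (greedyLevel c u) (greedyLevel c v)).ncard := (ncard_Ioo_nat _ _).symm
    _ ≤ (greedyLevel c '' (D ∩ Ioo u v)).ncard := ncard_le_ncard hsub (hfin.image _)
    _ ≤ (D ∩ Ioo u v).ncard := ncard_image_le hfin

theorem le_ncard (hG : IsClosedGraph G) (hbound : ∀ x y, G.Adj x y → y ≤ n) {D : Set ℕ}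
    (hD : IsRCDS n G D) : d ≤ D.ncard := by
  have hDfin : D.Finite := (finite_Icc 1 n).subset hD.1
  have hdn : d + 2 ≤ n := h.last ▸ h.lt_apply le_rfl
  rcases (Icc 1 n \ D).eq_empty_or_nonempty with hS | hS
  · have := ncard_le_ncard (sdiff_eq_empty.mp hS) hDfin
    rw [ncard_Icc_nat] at this
    omega
  · have hSfin : (Icc 1 n \ D).Finite := (finite_Icc 1 n).sdiff
    obtain ⟨u, hu, humin⟩ := exists_min_image _ id hSfin hS
    obtain ⟨v, hv, hvmax⟩ := exists_max_image _ id hSfin hS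
    have hcover : Icc 1 n \ Icc u v ⊆ D := by
      rintro x ⟨hx, hxuv⟩
      by_contra hxD
      exact hxuv ⟨humin x ⟨hx, hxD⟩, hvmax x ⟨hx, hxD⟩⟩
    have hdisj : Disjoint (Icc 1 n \ Icc u v) (D ∩ Ioo u v) :=
      disjoint_left.mpr fun x hx hx' => hx.2 (Ioo_subset_Icc_self hx'.2)
    have hcard : (Icc 1 n \ Icc u v).ncard + (D ∩ Ioo u v).ncard ≤ D.ncard := by
      rw [← ncard_union_eq hdisj]
      exact ncard_le_ncard (union_subset hcover inter_subset_left) hDfin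
    rw [ncard_sdiff (Icc_subset_Icc hu.1.1 hv.1.2), ncard_Icc_nat, ncard_Icc_nat] at hcard
    have := h.le_ncard_inter_Ioo hG hbound hD hu hv
    have := h.greedyLevel_lt_self hu.1.1 hu.1.2
    have := h.le_greedyLevel_add hv.1.2
    have : u ≤ v := humin v hv
    omega

end IsGreedySeq

theorem greedy_is_minimum_RCDS_general
    (n : ℕ) (G : SimpleGraph ℕ)
    (hGrange : ∀ u v : ℕ, G.Adj u v → u ∈ Set.Icc 1 n ∧ v ∈ Set.Icc 1 n)
    (hclosed : IsClosedGraph G)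
    (c : ℕ → ℕ) (d : ℕ)
    (hc0 : c 0 = 1)
    (hgreedy : ∀ i : ℕ, i ≤ d → IsGreatest {v : ℕ | v = c i ∨ G.Adj (c i) v} (c (i + 1)))
    (hstop : c (d + 1) = n)
    (hne : ∀ i : ℕ, i ≤ d → c i ≠ n) :
    IsRCDS n G (c '' Set.Icc 1 d) ∧
    (c '' Set.Icc 1 d).ncard = d ∧
    ∀ D : Set ℕ, IsRCDS n G D → d ≤ D.ncard := by
  have h : IsGreedySeq G n c d := ⟨hc0, hgreedy, hstop, hne⟩
  exact ⟨h.isRCDS hclosed, h.ncard_image,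
    fun D hD => h.le_ncard hclosed (fun u v huv => (hGrange u v huv).2.2) hD⟩

/-- Proposition 4.4: for a connected closed graph `G` on `[1,n]`, the greedy sequence
`c 0 = 1`, `c (i+1) = max {v : v = c i or v adjacent to c i}` (stopping when `c (d+1) = n`)
yields a reduced connected dominating set `{c 1, …, c d}` of minimum cardinality; in
particular `d` is the reduced connected domination number `γ_c*(G)`. -/
theorem greedy_is_minimum_RCDS
    (n : ℕ) (hn : 1 ≤ n) (G : SimpleGraph ℕ)
    (hGrange : ∀ u v : ℕ, G.Adj u v → u ∈ Set.Icc 1 n ∧ v ∈ Set.Icc 1 n)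
    (hclosed : IsClosedGraph G)
    (hconn : (G.induce (Set.Icc 1 n)).Connected)
    (c : ℕ → ℕ) (d : ℕ)
    (hc0 : c 0 = 1)
    (hgreedy : ∀ i : ℕ, i ≤ d → IsGreatest {v : ℕ | v = c i ∨ G.Adj (c i) v} (c (i + 1)))
    (hstop : c (d + 1) = n)
    (hne : ∀ i : ℕ, i ≤ d → c i ≠ n) :
    IsRCDS n G (c '' Set.Icc 1 d) ∧
    (c '' Set.Icc 1 d).ncard = d ∧
    ∀ D : Set ℕ, IsRCDS n G D → d ≤ D.ncard :=
  greedy_is_minimum_RCDS_general n G hGrange hclosed c d hc0 hgreedy hstop hne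
end

section
/- Let G be a connected closed graph on [n] with maximal cliques F_i = [a_i, b_i], i = 1, …, t, where 1 = a_1 < ⋯ < a_t and b_t = n, and let W_i = F_i ∩ F_{i+1} for 1 ≤ i ≤ t − 1. Then a non-empty subset T ⊆ [n] is a cut set of G if and only if T = W_{j_1} ⊔ ⋯ ⊔ W_{j_s} for some s ≥ 1 and 1 ≤ j_1 < ⋯ < j_s ≤ t − 1, with max(W_{j_i}) + 1 < min(W_{j_{i+1}}) for all 1 ≤ i ≤ s − 1. -/
/-- Number of connected components of the induced subgraph of `G` on `S`. -/
noncomputable def numComponents (G : SimpleGraph ℕ) (S : Set ℕ) : ℕ :=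
  Nat.card (G.induce S).ConnectedComponent

/-- `T` is a cut set of `G` (with vertex set `[1,n]`): `T ⊆ [1,n]` and every `v ∈ T`
is a cut vertex of the induced subgraph `G \ (T \ {v})`, i.e. deleting `v` from
`G \ (T \ {v})` strictly increases the number of connected components. -/
def IsCutSet (n : ℕ) (G : SimpleGraph ℕ) (T : Set ℕ) : Prop :=
  T ⊆ Set.Icc 1 n ∧
  ∀ v ∈ T, numComponents G (Set.Icc 1 n \ (T \ {v})) < numComponents G (Set.Icc 1 n \ T)

/-!
Write `S = [1,n] \ T` and `W_j = [a_{j+1}, b_j]`. Adding `v ∈ T` back to `G[S]` fuses `v` with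
the components of its neighbours, so `v` is a cut vertex of `G[S ∪ {v}]` iff two neighbours of
`v` lie in different components of `G[S]`. The cliques are intervals whose endpoints increase,
so an edge of `G[S]` never jumps over a block `W_j ⊆ T`, while consecutive cliques sharing a
vertex of `S` lie in one component of `G[S]`. Hence two neighbours `p < v < q` are separated
exactly when some `W_j ⊆ T` containing `v` sits between them; for `v ∈ W_j ⊆ T` the witnesses
are `a_{j+1} - 1` and `b_j + 1`, which survive precisely under the gap condition. Conversely, if
`W_j, W_{j'} ⊆ T` with `j < j'` had no gap, the cut vertex `b_j + 1 ∈ W_{j'}` would need a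
neighbour below it in `S`, and that edge would jump over `W_j`.
-/

open Set

namespace SimpleGraph

variable {V : Type*} {G : SimpleGraph V}

theorem Reachable.eq_of_forall_adj_eq {β : Sort*} {f : V → β}
    (hf : ∀ u w, G.Adj u w → f u = f w) {u w : V} (h : G.Reachable u w) : f u = f w := by
  rw [reachable_iff_reflTransGen] at h
  induction h with
  | refl => rfl
  | tail _ hxy ih => exact ih.trans (hf _ _ hxy)

variable {S : Set V} {v : V}

theorem card_connectedComponent_induce_le_insert (hS : (insert v S).Finite)
    (h : ∀ p q : S, G.Adj p v → G.Adj q v → (G.induce S).Reachable p q) :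
    Nat.card (G.induce S).ConnectedComponent ≤
      Nat.card (G.induce (insert v S)).ConnectedComponent := by
  classical
  have := hS.to_subtype
  rcases isEmpty_or_nonempty (G.induce S).ConnectedComponent with _ | ⟨⟨c₀⟩⟩
  · simp
  -- `g` retracts `v` onto the component of `G.induce S` containing all neighbours of `v`
  let c : (G.induce S).ConnectedComponent :=
    if hv : ∃ p : S, G.Adj p v then (G.induce S).connectedComponentMk hv.choose else c₀
  have hc (p : S) (hp : G.Adj p v) : (G.induce S).connectedComponentMk p = c := by
    have hv : ∃ p : S, G.Adj p v := ⟨p, hp⟩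
    simp only [c, dif_pos hv]
    exact ConnectedComponent.sound (h _ _ hp hv.choose_spec)
  let g : ↥(insert v S) → (G.induce S).ConnectedComponent := fun x =>
    if hx : x.1 ∈ S then (G.induce S).connectedComponentMk ⟨x, hx⟩ else c
  have hg (x y) (hxy : (G.induce (insert v S)).Adj x y) : g x = g y := by
    obtain ⟨x, hx⟩ := x
    obtain ⟨y, hy⟩ := y
    replace hxy : G.Adj x y := hxy
    by_cases hxS : x ∈ S <;> by_cases hyS : y ∈ S
    · simp only [g, dif_pos hxS, dif_pos hyS]
      exact ConnectedComponent.connectedComponentMk_eq_of_adj hxy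
    · obtain rfl : y = v := hy.resolve_right hyS
      simp only [g, dif_pos hxS, dif_neg hyS]
      exact hc ⟨x, hxS⟩ hxy
    · obtain rfl : x = v := hx.resolve_right hxS
      simp only [g, dif_neg hxS, dif_pos hyS]
      exact (hc ⟨y, hyS⟩ hxy.symm).symm
    · exact absurd ((hx.resolve_right hxS).trans (hy.resolve_right hyS).symm) hxy.ne
  refine Nat.card_le_card_of_surjective
    (ConnectedComponent.lift g fun _ _ p _ => Reachable.eq_of_forall_adj_eq hg ⟨p⟩) ?_
  refine ConnectedComponent.ind fun x =>
    ⟨(G.induce _).connectedComponentMk ⟨x, mem_insert_of_mem v x.2⟩, ?_⟩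
  simp [g]

theorem card_connectedComponent_induce_insert_lt (hS : S.Finite) {p q : S} (hp : G.Adj p v)
    (hq : G.Adj q v) (hpq : ¬ (G.induce S).Reachable p q) :
    Nat.card (G.induce (insert v S)).ConnectedComponent <
      Nat.card (G.induce S).ConnectedComponent := by
  have := hS.to_subtype
  let φ := ConnectedComponent.map (induceHomOfLE G (subset_insert v S)).toHom
  let ι (x : S) : ↥(insert v S) := ⟨x, mem_insert_of_mem v x.2⟩
  let v' : ↥(insert v S) := ⟨v, mem_insert v S⟩
  have hpv : (G.induce (insert v S)).Adj (ι p) v' := hp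
  have hvq : (G.induce (insert v S)).Adj v' (ι q) := hq.symm
  have hsurj : φ.Surjective := by
    refine ConnectedComponent.ind fun ⟨x, hx⟩ => ?_
    rcases hx with rfl | hxS
    · exact ⟨(G.induce S).connectedComponentMk q, ConnectedComponent.sound hvq.symm.reachable⟩
    · exact ⟨(G.induce S).connectedComponentMk ⟨x, hxS⟩, rfl⟩
  have hφ : φ ((G.induce S).connectedComponentMk p) = φ ((G.induce S).connectedComponentMk q) :=
    ConnectedComponent.sound (hpv.reachable.trans hvq.reachable)
  exact lt_of_not_ge fun hle =>
    hpq (ConnectedComponent.exact ((hsurj.bijective_of_nat_card_le hle).1 hφ))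

theorem card_connectedComponent_induce_insert_lt_iff (hS : S.Finite) :
    Nat.card (G.induce (insert v S)).ConnectedComponent <
        Nat.card (G.induce S).ConnectedComponent ↔
      ∃ p q : S, G.Adj p v ∧ G.Adj q v ∧ ¬ (G.induce S).Reachable p q := by
  refine ⟨fun hlt => ?_, fun ⟨p, q, hp, hq, hpq⟩ =>
    card_connectedComponent_induce_insert_lt hS hp hq hpq⟩
  by_contra! h
  exact (card_connectedComponent_induce_le_insert (hS.insert v) h).not_gt hlt

end SimpleGraph

theorem isCutSet_iff_forall_exists_not_reachable {n : ℕ} {G : SimpleGraph ℕ} {T : Set ℕ} :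
    IsCutSet n G T ↔ T ⊆ Icc 1 n ∧ ∀ v ∈ T, ∃ p q : ↥(Icc 1 n \ T),
      G.Adj p v ∧ G.Adj q v ∧ ¬ (G.induce (Icc 1 n \ T)).Reachable p q := by
  refine and_congr_right fun hT => forall₂_congr fun v hv => ?_
  have : Icc 1 n \ (T \ {v}) = insert v (Icc 1 n \ T) := by
    ext x
    by_cases hx : x = v
    · subst hx
      simp [hT hv]
    · simp [hx]
  rw [numComponents, numComponents, this]
  exact SimpleGraph.card_connectedComponent_induce_insert_lt_iff (finite_Icc 1 n).sdiff

theorem Set.Finite.exists_strictMonoOn_image_Icc_eq {J : Set ℕ} (hJ : J.Finite) :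
    ∃ s, ∃ j : ℕ → ℕ, StrictMonoOn j (Icc 1 s) ∧ j '' Icc 1 s = J := by
  refine ⟨hJ.toFinset.card, fun i => Nat.nth (· ∈ J) (i - 1), ?_, ?_⟩
  · rintro x ⟨hx, -⟩ y ⟨-, hy⟩ hxy
    exact Nat.nth_strictMonoOn (p := (· ∈ J)) hJ (show x - 1 < hJ.toFinset.card by omega)
      (show y - 1 < hJ.toFinset.card by omega) (by omega)
  · ext x
    constructor
    · rintro ⟨i, ⟨hi, hi'⟩, rfl⟩
      exact Nat.nth_mem_of_lt_card (p := (· ∈ J)) hJ (show i - 1 < hJ.toFinset.card by omega)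
    · intro hx
      obtain ⟨i, hi, rfl⟩ := Nat.exists_lt_card_finite_nth_eq (p := (· ∈ J)) hJ hx
      exact ⟨i + 1, ⟨by omega, hi⟩, rfl⟩

def intervalCliqueGraph (t : ℕ) (a b : ℕ → ℕ) : SimpleGraph ℕ where
  Adj u v := u ≠ v ∧ ∃ i ∈ Icc 1 t, u ∈ Icc (a i) (b i) ∧ v ∈ Icc (a i) (b i)
  symm := ⟨fun _ _ ⟨h, i, hi, hu, hv⟩ => ⟨h.symm, i, hi, hv, hu⟩⟩
  loopless := ⟨fun _ h => h.1 rfl⟩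

namespace intervalCliqueGraph

open SimpleGraph

variable {t : ℕ} {a b : ℕ → ℕ} {S : Set ℕ}

theorem adj_iff {u v : ℕ} : (intervalCliqueGraph t a b).Adj u v ↔
    u ≠ v ∧ ∃ i ∈ Icc 1 t, u ∈ Icc (a i) (b i) ∧ v ∈ Icc (a i) (b i) :=
  Iff.rfl

theorem adj_of_le_of_lt_of_le {u w x y : ℕ} (h : (intervalCliqueGraph t a b).Adj u w)
    (hux : u ≤ x) (hxy : x < y) (hyw : y ≤ w) : (intervalCliqueGraph t a b).Adj x y := by
  obtain ⟨-, i, hi, hu, hw⟩ := adj_iff.mp h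
  exact adj_iff.mpr ⟨hxy.ne, i, hi, ⟨hu.1.trans hux, (hxy.trans_le (hyw.trans hw.2)).le⟩,
    ⟨(hu.1.trans hux).trans hxy.le, hyw.trans hw.2⟩⟩

theorem reachable_of_mem_Icc {i : ℕ} (hi : i ∈ Icc 1 t) {x y : S} (hx : x.1 ∈ Icc (a i) (b i))
    (hy : y.1 ∈ Icc (a i) (b i)) : ((intervalCliqueGraph t a b).induce S).Reachable x y := by
  obtain rfl | hxy := eq_or_ne x y
  · rfl
  · exact Adj.reachable <| adj_iff.mpr ⟨Subtype.coe_injective.ne hxy, i, hi, hx, hy⟩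

theorem exists_lt_lt_of_not_reachable {v : ℕ} {p q : S}
    (hp : (intervalCliqueGraph t a b).Adj p v) (hq : (intervalCliqueGraph t a b).Adj q v)
    (hpq : ¬ ((intervalCliqueGraph t a b).induce S).Reachable p q) :
    ∃ p q : S, p.1 < v ∧ v < q.1 ∧ (intervalCliqueGraph t a b).Adj p v ∧
      (intervalCliqueGraph t a b).Adj v q ∧
      ¬ ((intervalCliqueGraph t a b).induce S).Reachable p q := by
  wlog hlt : p.1 < q.1 generalizing p q
  · obtain heq | hgt := (not_lt.mp hlt).eq_or_lt
    · exact absurd (Subtype.ext heq ▸ Reachable.refl _) hpq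
    · exact this hq hp (fun h => hpq h.symm) hgt
  refine ⟨p, q, ?_, ?_, hp, hq.symm, hpq⟩
  · by_contra! hvp
    exact hpq (Adj.reachable (adj_of_le_of_lt_of_le hq.symm hvp hlt le_rfl))
  · by_contra! hqv
    exact hpq (Adj.reachable (adj_of_le_of_lt_of_le hp le_rfl hlt hqv))

theorem le_of_adj_of_le (ha : MonotoneOn a (Icc 1 t)) (hb : MonotoneOn b (Icc 1 t)) {j : ℕ}
    (hj : j ∈ Ico 1 t) {u w : ℕ} (hu : u ∉ Icc (a (j + 1)) (b j))
    (huw : (intervalCliqueGraph t a b).Adj u w) (hub : u ≤ b j) : w ≤ b j := by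
  obtain ⟨-, m, hm, hum, hwm⟩ := adj_iff.mp huw
  have hua : u < a (j + 1) := by
    by_contra! h
    exact hu ⟨h, hub⟩
  have hmj : m < j + 1 := ha.reflect_lt hm ⟨by omega, hj.2⟩ (hum.1.trans_lt hua)
  exact hwm.2.trans (hb hm ⟨hj.1, hj.2.le⟩ (by omega))

theorem not_reachable_of_le_of_lt (ha : MonotoneOn a (Icc 1 t)) (hb : MonotoneOn b (Icc 1 t))
    {j : ℕ} (hj : j ∈ Ico 1 t) (hS : Disjoint S (Icc (a (j + 1)) (b j))) {x y : S}
    (hx : x.1 ≤ b j) (hy : b j < y.1) :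
    ¬ ((intervalCliqueGraph t a b).induce S).Reachable x y := by
  intro h
  have hinv (u w : S) (huw : ((intervalCliqueGraph t a b).induce S).Adj u w) :
      (u.1 ≤ b j) = (w.1 ≤ b j) :=
    propext ⟨le_of_adj_of_le ha hb hj (disjoint_left.mp hS u.2) huw,
      le_of_adj_of_le ha hb hj (disjoint_left.mp hS w.2) huw.symm⟩
  exact hy.not_ge (h.eq_of_forall_adj_eq (f := fun z : S => z.1 ≤ b j) hinv ▸ hx)

theorem reachable_of_forall_Ico_nonempty (ha : MonotoneOn a (Icc 1 t))
    (hb : MonotoneOn b (Icc 1 t)) {i k : ℕ} (hi : 1 ≤ i) (hk : k ≤ t) (hik : i ≤ k)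
    (hS : ∀ m ∈ Ico i k, (S ∩ Icc (a (m + 1)) (b m)).Nonempty) {x y : S}
    (hx : x.1 ∈ Icc (a i) (b i)) (hy : y.1 ∈ Icc (a k) (b k)) :
    ((intervalCliqueGraph t a b).induce S).Reachable x y := by
  induction k, hik using Nat.le_induction generalizing y with
  | base => exact reachable_of_mem_Icc ⟨hi, hk⟩ hx hy
  | succ k hik ih =>
    obtain ⟨z, hzS, hz⟩ := hS k ⟨hik, lt_add_one k⟩
    have hk₀ : k ∈ Icc 1 t := ⟨by omega, by omega⟩
    have hk₁ : k + 1 ∈ Icc 1 t := ⟨by omega, hk⟩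
    have hzk : z ∈ Icc (a k) (b k) := ⟨(ha hk₀ hk₁ k.le_succ).trans hz.1, hz.2⟩
    have hzk₁ : z ∈ Icc (a (k + 1)) (b (k + 1)) :=
      ⟨hz.1, hz.2.trans (hb hk₀ hk₁ k.le_succ)⟩
    have hxz := ih (by omega) (fun m hm => hS m ⟨hm.1, hm.2.trans (lt_add_one k)⟩)
      (y := ⟨z, hzS⟩) hzk
    exact hxz.trans (reachable_of_mem_Icc hk₁ hzk₁ hy)

theorem exists_mem_Icc_disjoint_of_not_reachable (ha : MonotoneOn a (Icc 1 t))
    (hb : MonotoneOn b (Icc 1 t)) {v : ℕ} {p q : S} (hpv : p.1 < v) (hvq : v < q.1)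
    (hp : (intervalCliqueGraph t a b).Adj p v) (hq : (intervalCliqueGraph t a b).Adj v q)
    (hpq : ¬ ((intervalCliqueGraph t a b).induce S).Reachable p q) :
    ∃ j ∈ Ico 1 t, v ∈ Icc (a (j + 1)) (b j) ∧ Disjoint S (Icc (a (j + 1)) (b j)) := by
  obtain ⟨-, i, hi, hpi, hvi⟩ := adj_iff.mp hp
  obtain ⟨-, k, hk, hvk, hqk⟩ := adj_iff.mp hq
  have hik : i < k := by
    by_contra! hki
    have hpk : p.1 ∈ Icc (a k) (b k) :=
      ⟨(ha hk hi hki).trans hpi.1, (hpv.trans hvq).le.trans hqk.2⟩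
    exact hpq (reachable_of_mem_Icc hk hpk hqk)
  by_contra! h
  refine hpq (reachable_of_forall_Ico_nonempty ha hb hi.1 hk.2 hik.le (fun m hm => ?_) hpi hqk)
  obtain ⟨him, hmk⟩ := hm
  have hm₀ : m ∈ Icc 1 t := ⟨hi.1.trans him, (hmk.trans_le hk.2).le⟩
  have hm₁ : m + 1 ∈ Icc 1 t := ⟨by omega, hmk.trans_le hk.2⟩
  exact not_disjoint_iff_nonempty_inter.mp (h m ⟨hm₀.1, hmk.trans_le hk.2⟩
    ⟨(ha hm₁ hk hmk).trans hvk.1, hvi.2.trans (hb hi hm₀ him)⟩)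

theorem exists_not_reachable_of_mem_Icc (ha : StrictMonoOn a (Icc 1 t))
    (hb : StrictMonoOn b (Icc 1 t)) {j : ℕ} (hj : j ∈ Ico 1 t)
    (hS : Disjoint S (Icc (a (j + 1)) (b j))) {v : ℕ} (hv : v ∈ Icc (a (j + 1)) (b j))
    (hp : a (j + 1) - 1 ∈ S) (hq : b j + 1 ∈ S) :
    ∃ p q : S, (intervalCliqueGraph t a b).Adj p v ∧ (intervalCliqueGraph t a b).Adj q v ∧
      ¬ ((intervalCliqueGraph t a b).induce S).Reachable p q := by
  have hj₀ : j ∈ Icc 1 t := ⟨hj.1, hj.2.le⟩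
  have hj₁ : j + 1 ∈ Icc 1 t := ⟨by omega, hj.2⟩
  have haj := ha hj₀ hj₁ (lt_add_one j)
  have hbj := hb hj₀ hj₁ (lt_add_one j)
  obtain ⟨hva, hvb⟩ := hv
  have hpv : (intervalCliqueGraph t a b).Adj (a (j + 1) - 1) v :=
    adj_iff.mpr ⟨by omega, j, hj₀, ⟨by omega, by omega⟩, ⟨by omega, hvb⟩⟩
  have hqv : (intervalCliqueGraph t a b).Adj (b j + 1) v :=
    adj_iff.mpr ⟨by omega, j + 1, hj₁, ⟨by omega, by omega⟩, ⟨hva, by omega⟩⟩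
  refine ⟨⟨_, hp⟩, ⟨_, hq⟩, hpv, hqv, ?_⟩
  exact not_reachable_of_le_of_lt ha.monotoneOn hb.monotoneOn hj hS
    (show a (j + 1) - 1 ≤ b j by omega) (show b j < b j + 1 by omega)

theorem add_one_lt_of_disjoint (ha : MonotoneOn a (Icc 1 t)) (hb : StrictMonoOn b (Icc 1 t))
    {j j' : ℕ} (hj : j ∈ Ico 1 t) (hj' : j' ∈ Ico 1 t) (hjj' : j < j')
    (hS : Disjoint S (Icc (a (j + 1)) (b j)))
    (hW : ∀ v ∈ Icc (a (j' + 1)) (b j'),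
      ∃ p : S, p.1 < v ∧ (intervalCliqueGraph t a b).Adj p v) :
    b j + 1 < a (j' + 1) := by
  by_contra! h
  have hbj := hb ⟨hj.1, hj.2.le⟩ ⟨hj'.1, hj'.2.le⟩ hjj'
  obtain ⟨p, hpv, hp⟩ := hW (b j + 1) ⟨h, hbj⟩
  have := le_of_adj_of_le ha hb.monotoneOn hj (disjoint_left.mp hS p.2) hp (by omega)
  omega

theorem Icc_subset_Icc_one {n : ℕ} (ha1 : a 1 = 1) (hbt : b t = n)
    (ha : MonotoneOn a (Icc 1 t)) (hb : MonotoneOn b (Icc 1 t)) {j : ℕ} (hj : j ∈ Ico 1 t) :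
    Icc (a (j + 1)) (b j) ⊆ Icc 1 n := by
  have ht : 1 ≤ t := hj.1.trans hj.2.le
  exact Icc_subset_Icc (ha1.symm.trans_le (ha ⟨le_rfl, ht⟩ ⟨by omega, hj.2⟩ (by omega)))
    ((hb ⟨hj.1, hj.2.le⟩ ⟨ht, le_rfl⟩ hj.2.le).trans_eq hbt)

theorem exists_eq_biUnion_of_isCutSet {n : ℕ} (ha1 : a 1 = 1) (hbt : b t = n)
    (ha : StrictMonoOn a (Icc 1 t)) (hb : StrictMonoOn b (Icc 1 t)) {T : Set ℕ}
    (hT : IsCutSet n (intervalCliqueGraph t a b) T) :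
    ∃ J ⊆ Ico 1 t, T = ⋃ j ∈ J, Icc (a (j + 1)) (b j) ∧
      ∀ j ∈ J, ∀ j' ∈ J, j < j' → b j + 1 < a (j' + 1) := by
  obtain ⟨-, hcut⟩ := isCutSet_iff_forall_exists_not_reachable.mp hT
  have hsplit (v : ℕ) (hv : v ∈ T) : ∃ p q : ↥(Icc 1 n \ T), p.1 < v ∧ v < q.1 ∧
      (intervalCliqueGraph t a b).Adj p v ∧ (intervalCliqueGraph t a b).Adj v q ∧
      ¬ ((intervalCliqueGraph t a b).induce (Icc 1 n \ T)).Reachable p q :=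
    let ⟨_, _, hp, hq, hpq⟩ := hcut v hv
    exists_lt_lt_of_not_reachable hp hq hpq
  have hsub (j : ℕ) (hj : j ∈ Ico 1 t)
      (hdisj : Disjoint (Icc 1 n \ T) (Icc (a (j + 1)) (b j))) : Icc (a (j + 1)) (b j) ⊆ T :=
    fun x hx => by_contra fun hxT => disjoint_left.mp hdisj
      ⟨Icc_subset_Icc_one ha1 hbt ha.monotoneOn hb.monotoneOn hj hx, hxT⟩ hx
  refine ⟨{j ∈ Ico 1 t | Icc (a (j + 1)) (b j) ⊆ T}, fun j hj => hj.1, ?_, ?_⟩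
  · refine subset_antisymm (fun v hv => ?_) (iUnion₂_subset fun j hj => hj.2)
    obtain ⟨p, q, hpv, hvq, hp, hq, hpq⟩ := hsplit v hv
    obtain ⟨j, hj, hvj, hdisj⟩ :=
      exists_mem_Icc_disjoint_of_not_reachable ha.monotoneOn hb.monotoneOn hpv hvq hp hq hpq
    exact mem_iUnion₂.mpr ⟨j, ⟨hj, hsub j hj hdisj⟩, hvj⟩
  · rintro j ⟨hj, hjT⟩ j' ⟨hj', hj'T⟩ hjj'
    refine add_one_lt_of_disjoint (S := Icc 1 n \ T) ha.monotoneOn hb hj hj' hjj'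
      (disjoint_sdiff_left.mono_right hjT) fun v hv => ?_
    obtain ⟨p, -, hpv, -, hp, -⟩ := hsplit v (hj'T hv)
    exact ⟨p, hpv, hp⟩

theorem sub_one_notMem_biUnion (ha : StrictMonoOn a (Icc 1 t)) {J : Set ℕ} (hJ : J ⊆ Ico 1 t)
    (hgap : ∀ j ∈ J, ∀ j' ∈ J, j < j' → b j + 1 < a (j' + 1)) {j : ℕ} (hj : j ∈ J)
    (ha₀ : 0 < a (j + 1)) : a (j + 1) - 1 ∉ ⋃ j ∈ J, Icc (a (j + 1)) (b j) := by
  simp only [mem_iUnion₂, mem_Icc, not_exists, not_and]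
  intro j' hj' hj'a
  rcases lt_trichotomy j' j with hlt | rfl | hlt
  · have := hgap j' hj' j hj hlt
    omega
  · omega
  · have : a (j + 1) < a (j' + 1) :=
      ha ⟨by omega, (hJ hj).2⟩ ⟨by omega, (hJ hj').2⟩ (by omega)
    omega

theorem add_one_notMem_biUnion (hb : StrictMonoOn b (Icc 1 t)) {J : Set ℕ} (hJ : J ⊆ Ico 1 t)
    (hgap : ∀ j ∈ J, ∀ j' ∈ J, j < j' → b j + 1 < a (j' + 1)) {j : ℕ} (hj : j ∈ J) :
    b j + 1 ∉ ⋃ j ∈ J, Icc (a (j + 1)) (b j) := by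
  simp only [mem_iUnion₂, mem_Icc, not_exists, not_and]
  intro j' hj' hj'a hj'b
  rcases lt_trichotomy j' j with hlt | rfl | hlt
  · have : b j' < b j :=
      hb ⟨(hJ hj').1, (hJ hj').2.le⟩ ⟨(hJ hj).1, (hJ hj).2.le⟩ hlt
    omega
  · omega
  · have := hgap j hj j' hj' hlt
    omega

theorem isCutSet_biUnion {n : ℕ} (ha1 : a 1 = 1) (hbt : b t = n)
    (ha : StrictMonoOn a (Icc 1 t)) (hb : StrictMonoOn b (Icc 1 t)) {J : Set ℕ}
    (hJ : J ⊆ Ico 1 t) (hgap : ∀ j ∈ J, ∀ j' ∈ J, j < j' → b j + 1 < a (j' + 1)) :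
    IsCutSet n (intervalCliqueGraph t a b) (⋃ j ∈ J, Icc (a (j + 1)) (b j)) := by
  set T := ⋃ j ∈ J, Icc (a (j + 1)) (b j)
  refine isCutSet_iff_forall_exists_not_reachable.mpr ⟨iUnion₂_subset fun j hj =>
    Icc_subset_Icc_one ha1 hbt ha.monotoneOn hb.monotoneOn (hJ hj), fun v hv => ?_⟩
  obtain ⟨j, hjJ, hvj⟩ := mem_iUnion₂.mp hv
  obtain ⟨hj1, hjt⟩ := hJ hjJ
  have ha₁ : 1 < a (j + 1) :=
    ha1.symm.trans_lt (ha ⟨le_rfl, by omega⟩ ⟨by omega, hjt⟩ (by omega))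
  have hbn : b j < n := (hb ⟨hj1, hjt.le⟩ ⟨by omega, le_rfl⟩ hjt).trans_eq hbt
  have hvj' := hvj.1.trans hvj.2
  have hWT : Icc (a (j + 1)) (b j) ⊆ T :=
    subset_biUnion_of_mem (u := fun j => Icc (a (j + 1)) (b j)) hjJ
  exact exists_not_reachable_of_mem_Icc ha hb ⟨hj1, hjt⟩
    (disjoint_sdiff_left.mono_right hWT) hvj
    ⟨⟨by omega, by omega⟩, sub_one_notMem_biUnion ha hJ hgap hjJ (by omega)⟩
    ⟨⟨by omega, by omega⟩, add_one_notMem_biUnion hb hJ hgap hjJ⟩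

theorem isCutSet_iff_exists_eq_biUnion {n : ℕ} (ha1 : a 1 = 1) (hbt : b t = n)
    (ha : StrictMonoOn a (Icc 1 t)) (hb : StrictMonoOn b (Icc 1 t)) {T : Set ℕ} :
    IsCutSet n (intervalCliqueGraph t a b) T ↔
      ∃ J ⊆ Ico 1 t, T = ⋃ j ∈ J, Icc (a (j + 1)) (b j) ∧
        ∀ j ∈ J, ∀ j' ∈ J, j < j' → b j + 1 < a (j' + 1) :=
  ⟨exists_eq_biUnion_of_isCutSet ha1 hbt ha hb, fun ⟨_, hJ, hT, hgap⟩ =>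
    hT ▸ isCutSet_biUnion ha1 hbt ha hb hJ hgap⟩

end intervalCliqueGraph

theorem exists_strictMonoOn_enumeration_iff {t : ℕ} {a b : ℕ → ℕ}
    (hb : StrictMonoOn b (Icc 1 t)) {T : Set ℕ} (hT : T.Nonempty) :
    (∃ s : ℕ, 1 ≤ s ∧ ∃ j : ℕ → ℕ,
        (∀ i ∈ Icc 1 s, 1 ≤ j i ∧ j i ≤ t - 1) ∧
        StrictMonoOn j (Icc 1 s) ∧
        T = ⋃ i ∈ Icc 1 s, Icc (a (j i + 1)) (b (j i)) ∧
        ∀ i : ℕ, 1 ≤ i → i ≤ s - 1 → b (j i) + 1 < a (j (i + 1) + 1)) ↔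
      ∃ J ⊆ Ico 1 t, T = ⋃ j ∈ J, Icc (a (j + 1)) (b j) ∧
        ∀ j ∈ J, ∀ j' ∈ J, j < j' → b j + 1 < a (j' + 1) := by
  constructor
  · rintro ⟨s, -, j, hj, hjmono, rfl, hgap⟩
    have hjIco : MapsTo j (Icc 1 s) (Ico 1 t) := fun i hi => by
      have := hj i hi
      exact ⟨this.1, by omega⟩
    refine ⟨j '' Icc 1 s, hjIco.image_subset, by rw [biUnion_image], ?_⟩
    -- only consecutive gaps are given; `b ∘ j` is monotone, so the gap before `j i'` suffices
    rintro _ ⟨i, hi, rfl⟩ _ ⟨i', hi', rfl⟩ hlt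
    rw [mem_Icc] at hi hi'
    have hii' : i < i' := (hjmono.lt_iff_lt hi hi').mp hlt
    have hprev : i' - 1 ∈ Icc 1 s := ⟨by omega, by omega⟩
    have hgap' := hgap (i' - 1) hprev.1 (by omega)
    rw [Nat.sub_add_cancel (by omega : 1 ≤ i')] at hgap'
    have := hb.monotoneOn ⟨(hjIco hi).1, (hjIco hi).2.le⟩
      ⟨(hjIco hprev).1, (hjIco hprev).2.le⟩ (hjmono.monotoneOn hi hprev (by omega))
    omega
  · rintro ⟨J, hJ, rfl, hgap⟩
    obtain ⟨s, j, hjmono, hjJ⟩ := ((finite_Ico 1 t).subset hJ).exists_strictMonoOn_image_Icc_eq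
    have hmem (i : ℕ) (hi : i ∈ Icc 1 s) : j i ∈ J := hjJ ▸ mem_image_of_mem j hi
    refine ⟨s, Nat.one_le_iff_ne_zero.mpr fun hs => ?_, j, fun i hi => ?_, hjmono,
      by rw [← hjJ, biUnion_image], fun i hi his => ?_⟩
    · subst hs
      obtain ⟨v, hv⟩ := hT
      simp [← hjJ] at hv
    · obtain ⟨hji, hjt⟩ := hJ (hmem i hi)
      exact ⟨hji, by omega⟩
    · exact hgap _ (hmem i ⟨hi, by omega⟩) _ (hmem (i + 1) ⟨by omega, by omega⟩)
        (hjmono ⟨hi, by omega⟩ ⟨by omega, by omega⟩ (lt_add_one i))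

theorem cutSet_iff_union_of_connected_cutSets_general
    (n t : ℕ) (G : SimpleGraph ℕ)
    (a b : ℕ → ℕ)
    (ha1 : a 1 = 1) (hbt : b t = n)
    (hamono : StrictMonoOn a (Set.Icc 1 t))
    (hbmono : StrictMonoOn b (Set.Icc 1 t))
    (hadj : ∀ u v : ℕ, G.Adj u v ↔
      u ≠ v ∧ ∃ i ∈ Set.Icc 1 t, u ∈ Set.Icc (a i) (b i) ∧ v ∈ Set.Icc (a i) (b i))
    (T : Set ℕ) (hT : T.Nonempty) :
    IsCutSet n G T ↔
      ∃ s : ℕ, 1 ≤ s ∧ ∃ j : ℕ → ℕ,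
        (∀ i ∈ Set.Icc 1 s, 1 ≤ j i ∧ j i ≤ t - 1) ∧
        StrictMonoOn j (Set.Icc 1 s) ∧
        T = ⋃ i ∈ Set.Icc 1 s, Set.Icc (a (j i + 1)) (b (j i)) ∧
        ∀ i : ℕ, 1 ≤ i → i ≤ s - 1 → b (j i) + 1 < a (j (i + 1) + 1) := by
  obtain rfl : G = intervalCliqueGraph t a b := by
    ext u v
    exact hadj u v
  rw [intervalCliqueGraph.isCutSet_iff_exists_eq_biUnion ha1 hbt hamono hbmono]
  exact (exists_strictMonoOn_enumeration_iff hbmono hT).symm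

/-- Proposition: for a connected closed graph `G` on `[1,n]` whose maximal cliques are
the intervals `[a i, b i]`, `i = 1, …, t`, a non-empty `T ⊆ [1,n]` is a cut set of `G`
iff `T` is a union `W_{j 1} ⊔ ⋯ ⊔ W_{j s}` of connected cut sets
`W_i = F_i ∩ F_{i+1} = [a (i+1), b i]` with `max (W_{j i}) + 1 < min (W_{j (i+1)})`. -/
theorem cutSet_iff_union_of_connected_cutSets
    (n t : ℕ) (ht : 1 ≤ t) (G : SimpleGraph ℕ)
    (a b : ℕ → ℕ)
    (ha1 : a 1 = 1) (hbt : b t = n)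
    (hab : ∀ i ∈ Set.Icc 1 t, a i ≤ b i)
    (hamono : StrictMonoOn a (Set.Icc 1 t))
    (hbmono : StrictMonoOn b (Set.Icc 1 t))
    (hoverlap : ∀ i : ℕ, 1 ≤ i → i < t → a (i + 1) ≤ b i)
    (hadj : ∀ u v : ℕ, G.Adj u v ↔
      u ≠ v ∧ ∃ i ∈ Set.Icc 1 t, u ∈ Set.Icc (a i) (b i) ∧ v ∈ Set.Icc (a i) (b i))
    (T : Set ℕ) (hT : T.Nonempty) (hTsub : T ⊆ Set.Icc 1 n) :
    IsCutSet n G T ↔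
      ∃ s : ℕ, 1 ≤ s ∧ ∃ j : ℕ → ℕ,
        (∀ i ∈ Set.Icc 1 s, 1 ≤ j i ∧ j i ≤ t - 1) ∧
        StrictMonoOn j (Set.Icc 1 s) ∧
        T = ⋃ i ∈ Set.Icc 1 s, Set.Icc (a (j i + 1)) (b (j i)) ∧
        ∀ i : ℕ, 1 ≤ i → i ≤ s - 1 → b (j i) + 1 < a (j (i + 1) + 1) :=
  cutSet_iff_union_of_connected_cutSets_general n t G a b ha1 hbt hamono hbmono hadj T hT
end

section
/- Let G be a connected Cohen–Macaulay closed graph whose maximal cliques are F_i = [a_i, a_{i+1}] for integers 1 = a_1 < a_2 < ⋯ < a_t < a_{t+1} = n, and write b_i = a_{i+1}. Then a non-empty subset T of the set {b_1, …, b_{t−1}} of cut vertices, say T = {b_{j_1} < ⋯ < b_{j_s}}, is a cut set of G if and only if b_{j_i} + 2 ≤ b_{j_{i+1}} for all i ∈ [s−1]. Moreover, every cut set of G is contained in {b_1, …, b_{t−1}}. -/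
theorem SimpleGraph.card_connectedComponent_eq_card_range {V β : Type*} (H : SimpleGraph V)
    (f : V → β) (hf : ∀ u v, H.Reachable u v ↔ f u = f v) :
    Nat.card H.ConnectedComponent = Nat.card (Set.range f) := by
  let F : H.ConnectedComponent → β :=
    SimpleGraph.ConnectedComponent.lift f fun u v p _ => (hf u v).1 ⟨p⟩
  have hF : Set.range F = Set.range f := by
    ext x
    constructor
    · rintro ⟨c, rfl⟩
      induction c using SimpleGraph.ConnectedComponent.ind with
      | h v => exact ⟨v, rfl⟩
    · rintro ⟨v, rfl⟩
      exact ⟨H.connectedComponentMk v, rfl⟩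
  have hinj : Function.Injective F :=
    SimpleGraph.ConnectedComponent.ind₂ fun u v h =>
      SimpleGraph.ConnectedComponent.sound ((hf u v).2 h)
  rw [← hF, Nat.card_range_of_injective hinj]

theorem SimpleGraph.Reachable.eq_of_forall_adj {V β : Type*} {H : SimpleGraph V} {f : V → β}
    (hf : ∀ u v, H.Adj u v → f u = f v) {u v : V} (h : H.Reachable u v) : f u = f v := by
  rw [SimpleGraph.reachable_iff_reflTransGen] at h
  induction h with
  | refl => rfl
  | tail _ hadj ih => exact ih.trans (hf _ _ hadj)

theorem exists_le_lt_succ_of_le_of_lt {b : ℕ → ℕ} {x : ℕ} :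
    ∀ {t : ℕ}, b 0 ≤ x → x < b t → ∃ k < t, b k ≤ x ∧ x < b (k + 1)
  | 0, h0, ht => absurd ht (not_lt.2 h0)
  | t + 1, h0, ht => by
    by_cases hx : x < b t
    · obtain ⟨k, hk, hbk⟩ := exists_le_lt_succ_of_le_of_lt h0 hx
      exact ⟨k, by omega, hbk⟩
    · exact ⟨t, by omega, not_lt.1 hx, ht⟩

def numBelow (C : Finset ℕ) (x : ℕ) : ℕ := (C.filter (· < x)).card

theorem numBelow_mono (C : Finset ℕ) : Monotone (numBelow C) := fun _ _ hxy =>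
  Finset.card_le_card (Finset.monotone_filter_right C fun _ _ h => h.trans_le hxy)

theorem numBelow_lt_numBelow {C : Finset ℕ} {c x y : ℕ} (hc : c ∈ C) (hxc : x ≤ c)
    (hcy : c < y) : numBelow C x < numBelow C y := by
  refine Finset.card_lt_card ⟨Finset.monotone_filter_right C fun _ _ h => by omega, fun h => ?_⟩
  have := h (Finset.mem_filter.2 ⟨hc, hcy⟩)
  simp only [Finset.mem_filter] at this
  omega

theorem numBelow_eq_numBelow_iff {C : Finset ℕ} {x y : ℕ} (hxy : x ≤ y) :
    numBelow C x = numBelow C y ↔ ∀ c ∈ C, c < x ∨ y ≤ c := by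
  constructor
  · intro h c hc
    by_contra! hcxy
    exact (numBelow_lt_numBelow hc hcxy.1 hcxy.2).ne h
  · intro h
    refine congrArg Finset.card (Finset.filter_congr fun c hc => ?_)
    have := h c hc
    omega

/-- The first vertices of the maximal runs of consecutive integers in `[1, n] \ C`. -/
def runStarts (n : ℕ) (C : Finset ℕ) : Finset ℕ :=
  (Finset.Icc 1 n).filter fun x => x ∉ C ∧ (x = 1 ∨ x - 1 ∈ C)

section runStarts

variable {n : ℕ} {C : Finset ℕ}

theorem exists_mem_runStarts_numBelow_eq {y : ℕ} (hy : y ∈ Set.Icc 1 n \ ↑C) :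
    ∃ x ∈ runStarts n C, numBelow C x = numBelow C y := by
  let x := Nat.findGreatest (fun x => x = 1 ∨ x - 1 ∈ C) y
  have hx1 : 1 ≤ x := Nat.le_findGreatest hy.1.1 (Or.inl rfl)
  have hxy : x ≤ y := Nat.findGreatest_le y
  have hgap : ∀ z, x ≤ z → z < y → z ∉ C := fun z hxz hzy hz =>
    Nat.findGreatest_is_greatest (Nat.lt_succ_of_le hxz) hzy (Or.inr (by simpa using hz))
  have hxC : x ∉ C := by
    rcases hxy.eq_or_lt with h | h
    · exact h ▸ hy.2
    · exact hgap x le_rfl h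
  have hxstart : x = 1 ∨ x - 1 ∈ C :=
    Nat.findGreatest_spec (P := fun x => x = 1 ∨ x - 1 ∈ C) hy.1.1 (Or.inl rfl)
  refine ⟨x, Finset.mem_filter.2 ⟨Finset.mem_Icc.2 ⟨hx1, hxy.trans hy.1.2⟩, hxC, hxstart⟩,
    (numBelow_eq_numBelow_iff hxy).2 fun c hc => ?_⟩
  by_contra! h
  exact hgap c h.1 h.2 hc

theorem numBelow_injOn_runStarts : Set.InjOn (numBelow C) (runStarts n C) := by
  suffices ∀ x ∈ runStarts n C, ∀ y ∈ runStarts n C, x < y → numBelow C x < numBelow C y by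
    intro x hx y hy hxy
    by_contra hne
    rcases Nat.lt_or_gt_of_ne hne with h | h
    · exact (this x hx y hy h).ne hxy
    · exact (this y hy x hx h).ne' hxy
  intro x hx y hy hxy
  simp only [runStarts, Finset.mem_filter, Finset.mem_Icc] at hx hy
  have hy1 : y - 1 ∈ C := hy.2.2.resolve_left (by omega)
  exact numBelow_lt_numBelow hy1 (by omega) (by omega)

theorem ncard_image_numBelow_eq_card_runStarts :
    (numBelow C '' (Set.Icc 1 n \ ↑C)).ncard = (runStarts n C).card := by
  have himage : numBelow C '' (Set.Icc 1 n \ ↑C) = numBelow C '' ↑(runStarts n C) := by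
    refine Set.Subset.antisymm ?_ (Set.image_mono fun x hx => ?_)
    · rintro _ ⟨y, hy, rfl⟩
      obtain ⟨x, hx, hxy⟩ := exists_mem_runStarts_numBelow_eq hy
      exact ⟨x, hx, hxy⟩
    · simp only [runStarts, Finset.coe_filter, Finset.mem_Icc] at hx
      exact ⟨hx.1, hx.2.1⟩
  rw [himage, numBelow_injOn_runStarts.ncard_image, Set.ncard_coe_finset]

theorem card_runStarts_erase_lt_iff {v : ℕ} (hv : v ∈ C) (hv1 : 1 < v) (hvn : v < n) :
    (runStarts n (C.erase v)).card < (runStarts n C).card ↔ v - 1 ∉ C ∧ v + 1 ∉ C := by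
  have heq : (runStarts n (C.erase v)).erase v = (runStarts n C).erase (v + 1) := by
    ext x
    simp only [runStarts, Finset.mem_erase, Finset.mem_filter, Finset.mem_Icc]
    by_cases hx : x = v
    · subst hx; simp [hv]
    by_cases hx' : x = v + 1
    · subst hx'; simp [show v ≠ 0 by omega]
    have : x - 1 = v ↔ x = v + 1 := by omega
    grind
  have hv' : v ∈ runStarts n (C.erase v) ↔ v - 1 ∈ C := by
    simp [runStarts, show 1 ≤ v by omega, hvn.le, show v ≠ 1 by omega, show v - 1 ≠ v by omega]
  have hsucc : v + 1 ∈ runStarts n C ↔ v + 1 ∉ C := by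
    simp [runStarts, hv, hvn]
  have hcard := congrArg Finset.card heq
  rw [Finset.card_erase_eq_ite, Finset.card_erase_eq_ite] at hcard
  split_ifs at hcard <;> grind [Finset.card_pos]

end runStarts

theorem StrictMonoOn.forall_add_one_notMem_image_iff {c : ℕ → ℕ} {s : ℕ}
    (hc : StrictMonoOn c (Set.Icc 1 s)) :
    (∀ v ∈ c '' Set.Icc 1 s, v + 1 ∉ c '' Set.Icc 1 s) ↔
      ∀ i, 1 ≤ i → i ≤ s - 1 → c i + 2 ≤ c (i + 1) := by
  constructor
  · intro h i hi1 his
    have hlt : c i < c (i + 1) := hc ⟨hi1, by omega⟩ ⟨by omega, by omega⟩ (by omega)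
    by_contra! hgap
    exact h (c i) ⟨i, ⟨hi1, by omega⟩, rfl⟩ ⟨i + 1, ⟨by omega, by omega⟩, by omega⟩
  · rintro h _ ⟨k, hk, rfl⟩ ⟨l, hl, hkl⟩
    have hlt : k < l := (hc.lt_iff_lt hk hl).1 (by omega)
    have hls := hl.2
    have hle : c (k + 1) ≤ c l := hc.monotoneOn ⟨by omega, by omega⟩ hl (by omega)
    have := h k hk.1 (by omega)
    omega

/-- The connected closed graph on `[1, n]` whose maximal cliques are the intervals
`[b (i - 1), b i]`, `1 ≤ i ≤ t`; thus `b i` is the paper's `a_{i+1}`. -/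
structure IsCMClosedGraph (n t : ℕ) (b : ℕ → ℕ) (G : SimpleGraph ℕ) : Prop where
  b_zero : b 0 = 1
  b_last : b t = n
  strictMonoOn : StrictMonoOn b (Set.Icc 0 t)
  adj_iff : ∀ u v : ℕ, G.Adj u v ↔
    u ≠ v ∧ ∃ i ∈ Set.Icc 1 t, u ∈ Set.Icc (b (i - 1)) (b i) ∧ v ∈ Set.Icc (b (i - 1)) (b i)

def cutVertices (b : ℕ → ℕ) (t : ℕ) : Finset ℕ := (Finset.Icc 1 (t - 1)).image b

theorem coe_cutVertices (b : ℕ → ℕ) (t : ℕ) :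
    (cutVertices b t : Set ℕ) = b '' Set.Icc 1 (t - 1) := by
  simp [cutVertices]

namespace IsCMClosedGraph

variable {n t : ℕ} {b : ℕ → ℕ} {G : SimpleGraph ℕ}

theorem one_lt_and_lt_of_mem_cutVertices (hG : IsCMClosedGraph n t b G) {c : ℕ}
    (hc : c ∈ cutVertices b t) : 1 < c ∧ c < n := by
  obtain ⟨i, hi, rfl⟩ := Finset.mem_image.1 hc
  rw [Finset.mem_Icc] at hi
  rw [← hG.b_zero, ← hG.b_last]
  exact ⟨hG.strictMonoOn ⟨le_rfl, by omega⟩ ⟨by omega, by omega⟩ (by omega),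
    hG.strictMonoOn ⟨by omega, by omega⟩ ⟨by omega, le_rfl⟩ (by omega)⟩

variable {T : Set ℕ} {C : Finset ℕ}

theorem numBelow_eq_of_adj (hG : IsCMClosedGraph n t b G) (hC : ↑C = T ∩ ↑(cutVertices b t))
    {u v : ℕ} (hu : u ∉ T) (huv : u ≤ v) (hadj : G.Adj u v) :
    numBelow C u = numBelow C v := by
  obtain ⟨-, i, hi, hui, hvi⟩ := (hG.adj_iff u v).1 hadj
  refine (numBelow_eq_numBelow_iff huv).2 fun c hc => ?_
  have hc' : c ∈ T ∩ ↑(cutVertices b t) := hC ▸ hc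
  obtain ⟨k, hk, rfl⟩ := Finset.mem_image.1 hc'.2
  rw [Finset.mem_Icc] at hk
  have hit := hi.2
  by_contra! h
  have hki : k < i :=
    (hG.strictMonoOn.lt_iff_lt ⟨by omega, by omega⟩ ⟨by omega, hit⟩).1 (h.2.trans_le hvi.2)
  have : b k ≤ b (i - 1) :=
    hG.strictMonoOn.monotoneOn ⟨by omega, by omega⟩ ⟨by omega, by omega⟩ (by omega)
  exact hu (le_antisymm h.1 (this.trans hui.1) ▸ hc'.1)

theorem exists_adj_of_numBelow_eq (hG : IsCMClosedGraph n t b G)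
    (hC : ↑C = T ∩ ↑(cutVertices b t)) {x y : ℕ} (hx : x ∈ Set.Icc 1 n \ T)
    (hy : y ∈ Set.Icc 1 n \ T) (hxy : x < y) (h : numBelow C x = numBelow C y) :
    ∃ z ∈ Set.Icc 1 n \ T, x < z ∧ z ≤ y ∧ G.Adj x z ∧ numBelow C z = numBelow C y := by
  obtain ⟨k, hkt, hbk, hxk⟩ := exists_le_lt_succ_of_le_of_lt (b := b)
    (hG.b_zero ▸ hx.1.1) (hG.b_last ▸ hxy.trans_le hy.1.2)
  have hadj : ∀ z, x < z → z ≤ b (k + 1) → G.Adj x z := fun z hxz hz =>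
    (hG.adj_iff x z).2 ⟨hxz.ne, k + 1, ⟨by omega, by omega⟩,
      ⟨by simpa using hbk, hxk.le⟩, ⟨by simp only [add_tsub_cancel_right]; omega, hz⟩⟩
  by_cases hyk : y ≤ b (k + 1)
  · exact ⟨y, hy, hxy, le_rfl, hadj y hxy hyk, rfl⟩
  push Not at hyk
  have hk1 : k + 1 ≤ t - 1 := by
    by_contra
    have : b (k + 1) = n := by rw [← hG.b_last]; congr; omega
    exact absurd hy.1.2 (by omega)
  have hcut : b (k + 1) ∈ cutVertices b t :=
    Finset.mem_image_of_mem b (Finset.mem_Icc.2 ⟨by omega, hk1⟩)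
  have hnotT : b (k + 1) ∉ T := fun hT =>
    (numBelow_lt_numBelow (by rw [← Finset.mem_coe, hC]; exact ⟨hT, hcut⟩) hxk.le hyk).ne h
  have hbounds := hG.one_lt_and_lt_of_mem_cutVertices hcut
  refine ⟨b (k + 1), ⟨⟨hbounds.1.le, hbounds.2.le⟩, hnotT⟩, hxk, hyk.le, hadj _ hxk le_rfl,
    le_antisymm (numBelow_mono C hyk.le) ?_⟩
  exact h ▸ numBelow_mono C hxk.le

theorem reachable_of_numBelow_eq (hG : IsCMClosedGraph n t b G)
    (hC : ↑C = T ∩ ↑(cutVertices b t)) {x y : ℕ} (hx : x ∈ Set.Icc 1 n \ T)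
    (hy : y ∈ Set.Icc 1 n \ T) (hxy : x ≤ y) (h : numBelow C x = numBelow C y) :
    (G.induce (Set.Icc 1 n \ T)).Reachable ⟨x, hx⟩ ⟨y, hy⟩ := by
  induction hd : y - x using Nat.strong_induction_on generalizing x with
  | _ d ih =>
    rcases hxy.eq_or_lt with rfl | hlt
    · rfl
    obtain ⟨z, hz, hxz, hzy, hadj, hzy'⟩ := hG.exists_adj_of_numBelow_eq hC hx hy hlt h
    exact (SimpleGraph.Adj.reachable (SimpleGraph.induce_adj.2 hadj)).trans
      (ih (y - z) (by omega) hz hzy hzy' rfl)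

theorem numComponents_eq_ncard_image (hG : IsCMClosedGraph n t b G)
    (hC : ↑C = T ∩ ↑(cutVertices b t)) :
    numComponents G (Set.Icc 1 n \ T) = (numBelow C '' (Set.Icc 1 n \ T)).ncard := by
  rw [numComponents, SimpleGraph.card_connectedComponent_eq_card_range _
    (fun v : ↥(Set.Icc 1 n \ T) => numBelow C v), ← Set.image_eq_range, Nat.card_coe_set_eq]
  intro u v
  constructor
  · refine SimpleGraph.Reachable.eq_of_forall_adj
      (f := fun v : ↥(Set.Icc 1 n \ T) => numBelow C v) fun u v huv => ?_
    rcases le_total u.1 v.1 with h | h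
    · exact hG.numBelow_eq_of_adj hC u.2.2 h huv
    · exact (hG.numBelow_eq_of_adj hC v.2.2 h huv.symm).symm
  · intro h
    rcases le_total u.1 v.1 with huv | hvu
    · exact hG.reachable_of_numBelow_eq hC u.2 v.2 huv h
    · exact (hG.reachable_of_numBelow_eq hC v.2 u.2 hvu h.symm).symm

theorem subset_cutVertices_of_isCutSet (hG : IsCMClosedGraph n t b G) (hT : IsCutSet n G T) :
    T ⊆ cutVertices b t := by
  classical
  intro v hv
  by_contra hvcut
  let C := (cutVertices b t).filter (· ∈ T)
  have hC : ↑C = T ∩ ↑(cutVertices b t) := by ext; simp [C, and_comm]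
  have hC' : ↑C = (T \ {v}) ∩ ↑(cutVertices b t) := by
    ext x
    simp only [hC, Set.mem_inter_iff, Set.mem_sdiff, Set.mem_singleton_iff, Finset.mem_coe]
    exact ⟨fun h => ⟨⟨h.1, fun hxv => hvcut (hxv ▸ h.2)⟩, h.2⟩, fun h => ⟨h.1.1, h.2⟩⟩
  have hlt := hT.2 v hv
  rw [hG.numComponents_eq_ncard_image hC', hG.numComponents_eq_ncard_image hC] at hlt
  refine hlt.not_ge (Set.ncard_le_ncard ?_ ((Set.finite_Icc 1 n).sdiff.image _))
  exact Set.image_mono (Set.sdiff_subset_sdiff_right Set.sdiff_subset)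

theorem numComponents_eq_card_runStarts (hG : IsCMClosedGraph n t b G)
    (hC : C ⊆ cutVertices b t) :
    numComponents G (Set.Icc 1 n \ ↑C) = (runStarts n C).card := by
  rw [hG.numComponents_eq_ncard_image (Set.inter_eq_left.2 (Finset.coe_subset.2 hC)).symm,
    ncard_image_numBelow_eq_card_runStarts]

theorem isCutSet_iff (hG : IsCMClosedGraph n t b G) (hC : C ⊆ cutVertices b t) :
    IsCutSet n G ↑C ↔ ∀ v ∈ C, v + 1 ∉ C := by
  have hbounds := fun v (hv : v ∈ C) => hG.one_lt_and_lt_of_mem_cutVertices (hC hv)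
  have hstep : ∀ v ∈ C, numComponents G (Set.Icc 1 n \ (↑C \ {v})) <
      numComponents G (Set.Icc 1 n \ ↑C) ↔ v - 1 ∉ C ∧ v + 1 ∉ C := fun v hv => by
    rw [← Finset.coe_erase, hG.numComponents_eq_card_runStarts ((C.erase_subset v).trans hC),
      hG.numComponents_eq_card_runStarts hC]
    exact card_runStarts_erase_lt_iff hv (hbounds v hv).1 (hbounds v hv).2
  have hsub : (↑C : Set ℕ) ⊆ Set.Icc 1 n := fun v hv =>
    ⟨(hbounds v hv).1.le, (hbounds v hv).2.le⟩
  refine ⟨fun h v hv => ((hstep v hv).1 (h.2 v hv)).2, fun h => ⟨hsub, fun v hv => ?_⟩⟩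
  refine (hstep v hv).2 ⟨fun hv' => h (v - 1) hv' ?_, h v hv⟩
  rwa [Nat.sub_add_cancel (hbounds v hv).1.le]

end IsCMClosedGraph

theorem cutSets_of_CM_closed_graph_general
    (n t : ℕ) (G : SimpleGraph ℕ)
    (b : ℕ → ℕ) (hb0 : b 0 = 1) (hbt : b t = n)
    (hbmono : StrictMonoOn b (Set.Icc 0 t))
    (hadj : ∀ u v : ℕ, G.Adj u v ↔
      u ≠ v ∧ ∃ i ∈ Set.Icc 1 t,
        u ∈ Set.Icc (b (i - 1)) (b i) ∧ v ∈ Set.Icc (b (i - 1)) (b i)) :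
    (∀ T : Set ℕ, IsCutSet n G T → T ⊆ b '' Set.Icc 1 (t - 1)) ∧
    (∀ s : ℕ, 1 ≤ s → ∀ j : ℕ → ℕ,
      (∀ i ∈ Set.Icc 1 s, 1 ≤ j i ∧ j i ≤ t - 1) →
      StrictMonoOn j (Set.Icc 1 s) →
      (IsCutSet n G ((fun i => b (j i)) '' Set.Icc 1 s) ↔
        ∀ i : ℕ, 1 ≤ i → i ≤ s - 1 → b (j i) + 2 ≤ b (j (i + 1)))) := by
  have hG : IsCMClosedGraph n t b G := ⟨hb0, hbt, hbmono, hadj⟩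
  refine ⟨fun T hT => coe_cutVertices b t ▸ hG.subset_cutVertices_of_isCutSet hT,
    fun s _ j hj hjmono => ?_⟩
  have hc : StrictMonoOn (fun i => b (j i)) (Set.Icc 1 s) :=
    hbmono.comp hjmono fun i hi => ⟨Nat.zero_le _, (hj i hi).2.trans (Nat.sub_le t 1)⟩
  have hC : (Finset.Icc 1 s).image (fun i => b (j i)) ⊆ cutVertices b t :=
    Finset.image_subset_iff.2 fun i hi =>
      Finset.mem_image_of_mem b (Finset.mem_Icc.2 (hj i (Finset.mem_Icc.1 hi)))
  rw [← hc.forall_add_one_notMem_image_iff]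
  simpa using hG.isCutSet_iff hC

/-- For a connected Cohen–Macaulay closed graph `G` with maximal cliques the
consecutive intervals `[b (i-1), b i]`, `i = 1,…,t` (`b 0 = 1`, `b t = n`):
every cut set is contained in the set of cut vertices `{b 1, …, b (t-1)}`, and
a non-empty subset `T = {b (j 1) < ⋯ < b (j s)}` of the cut vertices is a cut set
iff `b (j i) + 2 ≤ b (j (i+1))` for all `i ∈ [s-1]`. -/
theorem cutSets_of_CM_closed_graph
    (n t : ℕ) (ht : 1 ≤ t) (G : SimpleGraph ℕ)
    (b : ℕ → ℕ) (hb0 : b 0 = 1) (hbt : b t = n)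
    (hbmono : StrictMonoOn b (Set.Icc 0 t))
    (hadj : ∀ u v : ℕ, G.Adj u v ↔
      u ≠ v ∧ ∃ i ∈ Set.Icc 1 t,
        u ∈ Set.Icc (b (i - 1)) (b i) ∧ v ∈ Set.Icc (b (i - 1)) (b i)) :
    (∀ T : Set ℕ, IsCutSet n G T → T ⊆ b '' Set.Icc 1 (t - 1)) ∧
    (∀ s : ℕ, 1 ≤ s → ∀ j : ℕ → ℕ,
      (∀ i ∈ Set.Icc 1 s, 1 ≤ j i ∧ j i ≤ t - 1) →
      StrictMonoOn j (Set.Icc 1 s) →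
      (IsCutSet n G ((fun i => b (j i)) '' Set.Icc 1 s) ↔
        ∀ i : ℕ, 1 ≤ i → i ≤ s - 1 → b (j i) + 2 ≤ b (j (i + 1)))) :=
  cutSets_of_CM_closed_graph_general n t G b hb0 hbt hbmono hadj
end

section
/- Let I ⊂ K[x_1,…,x_N] be a monomial complete intersection ideal generated by monomials u_1, …, u_r forming a regular sequence, and let k ≥ 1. Then for any product u_{e_1} ⋯ u_{e_{k−1}} of k−1 of the generators (with repetition allowed), the colon ideal (I^k : u_{e_1} ⋯ u_{e_{k−1}}) equals I. -/
/-!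
Write `x^a` for `monomial a 1`. Then `I^k` is spanned by the monomials `x^(d s₁ + ⋯ + d sₖ)`, so
if `p * x^c ∈ I^k` with `c = d (e 0) + ⋯ + d (e (k-2))`, every exponent `m` of `p` satisfies
`d s₁ + ⋯ + d sₖ ≤ c + m`. Cancel the summands common to both sides; since the left side has one
more summand, some `d a` survives on the left with no copy of it among the remaining summands of
`c`. The supports of the `d i` being disjoint, `c` vanishes on the support of `d a`, so `d a ≤ m`,
i.e. `x^(d a)` divides `x^m`.
-/

open MvPolynomial Function

section DisjointSupports

variable {ι σ : Type*} {d : ι → σ →₀ ℕ}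

lemma sum_map_apply_eq_zero_of_disjoint_support
    (hd : Pairwise (Disjoint on fun i => (d i).support)) {t : Multiset ι} {a : ι} (ha : a ∉ t)
    {x : σ} (hx : x ∈ (d a).support) : (t.map d).sum x = 0 := by
  induction t using Multiset.induction_on with
  | empty => simp
  | cons b t ih =>
    rw [Multiset.mem_cons, not_or] at ha
    rw [Multiset.map_cons, Multiset.sum_cons, Finsupp.add_apply, ih ha.2, add_zero]
    exact Finsupp.notMem_support_iff.1 (Finset.disjoint_left.1 (hd ha.1) hx)

lemma exists_le_of_sum_map_le_sum_map_add
    (hd : Pairwise (Disjoint on fun i => (d i).support)) {s t : Multiset ι}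
    (hst : Multiset.card t < Multiset.card s) {m : σ →₀ ℕ}
    (h : (s.map d).sum ≤ (t.map d).sum + m) : ∃ i ∈ s, d i ≤ m := by
  induction s using Multiset.induction_on generalizing t with
  | empty => simp at hst
  | cons a s ih =>
    rw [Multiset.map_cons, Multiset.sum_cons] at h
    by_cases ha : a ∈ t
    · obtain ⟨t, rfl⟩ := Multiset.exists_cons_of_mem ha
      rw [Multiset.map_cons, Multiset.sum_cons, add_assoc] at h
      obtain ⟨i, hi, hle⟩ := ih (by simpa using hst) (le_of_add_le_add_left h)
      exact ⟨i, Multiset.mem_cons_of_mem hi, hle⟩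
    · refine ⟨a, Multiset.mem_cons_self a s, fun x => ?_⟩
      by_cases hx : x ∈ (d a).support
      · have hx' := h x
        simp only [Finsupp.add_apply, sum_map_apply_eq_zero_of_disjoint_support hd ha hx,
          zero_add] at hx'
        exact le_of_add_le_left hx'
      · simp [Finsupp.notMem_support_iff.1 hx]

end DisjointSupports

namespace MvPolynomial

variable {ι σ R : Type*} [CommSemiring R]

lemma span_range_monomial_pow_le (d : ι → σ →₀ ℕ) (k : ℕ) :
    Ideal.span (Set.range fun i => monomial (d i) (1 : R)) ^ k ≤
      Ideal.span ((fun a => monomial a (1 : R)) ''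
        ((fun s : Multiset ι => (s.map d).sum) '' {s | Multiset.card s = k})) := by
  induction k with
  | zero =>
    rw [pow_zero, Ideal.one_eq_top, top_le_iff, Ideal.eq_top_iff_one]
    exact Ideal.subset_span ⟨0, ⟨0, rfl, rfl⟩, by simp⟩
  | succ k ih =>
    calc _ = _ * Ideal.span (Set.range fun i => monomial (d i) (1 : R)) := pow_succ _ _
      _ ≤ _ := Ideal.mul_mono_left ih
      _ = _ := Ideal.span_mul_span' _ _
      _ ≤ _ := by
        refine Ideal.span_mono ?_
        rintro _ ⟨_, ⟨_, ⟨s, hs, rfl⟩, rfl⟩, _, ⟨i, rfl⟩, rfl⟩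
        refine ⟨_, ⟨i ::ₘ s, by simpa using hs, rfl⟩, ?_⟩
        simp [monomial_mul, add_comm]

lemma mem_span_monomial_of_mul_monomial_mem {S T : Set (σ →₀ ℕ)} {c : σ →₀ ℕ}
    (hST : ∀ s ∈ S, ∀ m, s ≤ m + c → ∃ t ∈ T, t ≤ m) {p : MvPolynomial σ R}
    (hp : p * monomial c 1 ∈ Ideal.span ((fun a => monomial a (1 : R)) '' S)) :
    p ∈ Ideal.span ((fun a => monomial a (1 : R)) '' T) := by
  rw [mem_ideal_span_monomial_image] at hp ⊢
  intro m hm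
  obtain ⟨s, hs, hle⟩ := hp (m + c) (by
    rw [mem_support_iff, coeff_mul_monomial, mul_one]
    exact mem_support_iff.1 hm)
  exact hST s hs m hle

end MvPolynomial

theorem colon_pow_monomial_CI_general
    (σ : Type*) (K : Type*) [Field K] (r : ℕ)
    (d : Fin r → (σ →₀ ℕ))
    (hdisj : ∀ i j : Fin r, i ≠ j → Disjoint (d i).support (d j).support)
    (I : Ideal (MvPolynomial σ K))
    (hI : I = Ideal.span (Set.range fun i : Fin r => (monomial (d i) (1 : K))))
    (k : ℕ) (hk : 1 ≤ k) (e : ℕ → Fin r) :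
    Submodule.colon (I ^ k)
        (Ideal.span {∏ t ∈ Finset.range (k - 1), (monomial (d (e t)) (1 : K))}) = I := by
  apply le_antisymm
  · intro p hp
    rw [Ideal.mem_colon_span_singleton, ← monomial_sum_one, hI] at hp
    rw [hI, Set.range_comp' (fun a => monomial a (1 : K)) d]
    refine mem_span_monomial_of_mul_monomial_mem ?_ (span_range_monomial_pow_le d k hp)
    rintro _ ⟨s, hs : Multiset.card s = k, rfl⟩ m hle
    rw [Finset.sum_eq_multiset_sum, add_comm, ← comp_def d e, ← Multiset.map_map] at hle
    have hcard : Multiset.card ((Finset.range (k - 1)).val.map e) < Multiset.card s := by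
      simp only [Multiset.card_map, Finset.card_val, Finset.card_range]
      omega
    obtain ⟨i, -, hi⟩ :=
      exists_le_of_sum_map_le_sum_map_add (fun i j => hdisj i j) hcard hle
    exact ⟨d i, ⟨i, rfl⟩, hi⟩
  · intro p hp
    have hu : ∏ t ∈ Finset.range (k - 1), monomial (d (e t)) (1 : K) ∈ I ^ (k - 1) := by
      simpa using Ideal.prod_mem_prod (s := Finset.range (k - 1)) (I := fun _ => I)
        fun t _ => hI ▸ Ideal.subset_span ⟨e t, rfl⟩
    rw [Ideal.mem_colon_span_singleton, ← pow_sub_one_mul (by omega : k ≠ 0)]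
    exact mul_comm p _ ▸ Ideal.mul_mem_mul hu hp

/-- For a monomial complete intersection `I = (u_1, …, u_r)` (monomials with pairwise
disjoint supports, i.e. a regular sequence of non-unit monomials) and any product of
`k - 1` of the generators (repetitions allowed), `(I^k : u_{e 1} ⋯ u_{e (k-1)}) = I`. -/
theorem colon_pow_monomial_CI
    (σ : Type*) (K : Type*) [Field K] (r : ℕ)
    (d : Fin r → (σ →₀ ℕ))
    (hne : ∀ i : Fin r, d i ≠ 0)
    (hdisj : ∀ i j : Fin r, i ≠ j → Disjoint (d i).support (d j).support)
    (I : Ideal (MvPolynomial σ K))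
    (hI : I = Ideal.span (Set.range fun i : Fin r => (monomial (d i) (1 : K))))
    (k : ℕ) (hk : 1 ≤ k) (e : ℕ → Fin r) :
    Submodule.colon (I ^ k)
        (Ideal.span {∏ t ∈ Finset.range (k - 1), (monomial (d (e t)) (1 : K))}) = I :=
  colon_pow_monomial_CI_general σ K r d hdisj I hI k hk e
end

section
/- Let G be a connected closed graph on [n] with maximal cliques F_i = [a_i, b_i], 1 = a_1 < ⋯ < a_t, b_t = n, and let W_i = F_i ∩ F_{i+1} = [a_{i+1}, b_i] be a connected cut set. Set ε = {a_{i+1} − 1, b_i + 1}. Then ε is a non-edge of G, every vertex of W_i is adjacent to both a_{i+1} − 1 and b_i + 1, and every path in G from a_{i+1} − 1 to b_i + 1 passes through some vertex of W_i. -/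
/-!
An edge of `G` lies in a single interval `[a j, b j]`. If one end is left of `a (i+1)`,
monotonicity of `a` forces `j ≤ i`, and then monotonicity of `b` puts the other end at most
at `b i`. So no edge jumps from `≤ a (i+1) - 1` to `> b i`, and any walk from `≤ b i` to
`> b i` leaves `[0, b i]` along an edge whose start lies in `[a (i+1), b i]`.
-/

open Set

section IntervalCliques

variable {t : ℕ} {G : SimpleGraph ℕ} {a b : ℕ → ℕ}

lemma le_of_adj_of_lt_succ_start
    (hamono : MonotoneOn a (Icc 1 t)) (hbmono : MonotoneOn b (Icc 1 t))
    (hcover : ∀ u v, G.Adj u v → ∃ j ∈ Icc 1 t, u ∈ Icc (a j) (b j) ∧ v ∈ Icc (a j) (b j))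
    {i : ℕ} (hi : i ∈ Icc 1 t) (hi' : i + 1 ∈ Icc 1 t)
    {u v : ℕ} (huv : G.Adj u v) (hu : u < a (i + 1)) : v ≤ b i := by
  obtain ⟨j, hj, ⟨hju, -⟩, -, hjv⟩ := hcover u v huv
  have hji : j ≤ i := by
    by_contra! hij
    have := hamono hi' hj hij
    omega
  exact hjv.trans (hbmono hj hi hji)

lemma exists_mem_support_Icc_of_walk
    (hamono : MonotoneOn a (Icc 1 t)) (hbmono : MonotoneOn b (Icc 1 t))
    (hcover : ∀ u v, G.Adj u v → ∃ j ∈ Icc 1 t, u ∈ Icc (a j) (b j) ∧ v ∈ Icc (a j) (b j))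
    {i : ℕ} (hi : i ∈ Icc 1 t) (hi' : i + 1 ∈ Icc 1 t)
    {u v : ℕ} (p : G.Walk u v) (hu : u ≤ b i) (hv : b i < v) :
    ∃ w ∈ p.support, w ∈ Icc (a (i + 1)) (b i) := by
  obtain ⟨d, hd, hfst, hsnd⟩ := p.exists_boundary_dart (Iic (b i)) hu (not_le.2 hv)
  refine ⟨d.fst, p.dart_fst_mem_support_of_mem_darts hd, ?_, hfst⟩
  by_contra! hlt
  exact hsnd (le_of_adj_of_lt_succ_start hamono hbmono hcover hi hi' d.adj hlt)

end IntervalCliques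

theorem nonedge_and_separation_of_connected_cutSet_general
    (t : ℕ) (G : SimpleGraph ℕ)
    (a b : ℕ → ℕ)
    (hamono : StrictMonoOn a (Set.Icc 1 t))
    (hbmono : StrictMonoOn b (Set.Icc 1 t))
    (hoverlap : ∀ i : ℕ, 1 ≤ i → i < t → a (i + 1) ≤ b i)
    (hadj : ∀ u v : ℕ, G.Adj u v ↔
      u ≠ v ∧ ∃ i ∈ Set.Icc 1 t, u ∈ Set.Icc (a i) (b i) ∧ v ∈ Set.Icc (a i) (b i))
    (i : ℕ) (hi1 : 1 ≤ i) (hit : i < t) :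
    ¬ G.Adj (a (i + 1) - 1) (b i + 1) ∧
    (∀ w ∈ Set.Icc (a (i + 1)) (b i),
      G.Adj w (a (i + 1) - 1) ∧ G.Adj w (b i + 1)) ∧
    (∀ p : G.Walk (a (i + 1) - 1) (b i + 1),
      ∃ w ∈ p.support, w ∈ Set.Icc (a (i + 1)) (b i)) := by
  have hi : i ∈ Icc 1 t := ⟨hi1, hit.le⟩
  have hi' : i + 1 ∈ Icc 1 t := ⟨by omega, hit⟩
  have hcover u v (huv : G.Adj u v) := ((hadj u v).1 huv).2
  have ha : a i < a (i + 1) := hamono hi hi' (by omega)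
  have hb : b i < b (i + 1) := hbmono hi hi' (by omega)
  have hov := hoverlap i hi1 hit
  refine ⟨fun h => ?_, fun w ⟨hw₁, hw₂⟩ => ⟨?_, ?_⟩, fun p => ?_⟩
  · have := le_of_adj_of_lt_succ_start hamono.monotoneOn hbmono.monotoneOn hcover hi hi' h
      (by omega)
    omega
  · exact (hadj _ _).2 ⟨by omega, i, hi, ⟨by omega, hw₂⟩, by omega, by omega⟩
  · exact (hadj _ _).2 ⟨by omega, i + 1, hi', ⟨hw₁, by omega⟩, by omega, by omega⟩
  · exact exists_mem_support_Icc_of_walk hamono.monotoneOn hbmono.monotoneOn hcover hi hi' p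
      (by omega) (by omega)

/-- For a connected closed graph `G` on `[1,n]` with maximal cliques the intervals
`[a i, b i]`, and `W_i = F_i ∩ F_{i+1} = [a (i+1), b i]`: the pair
`ε = {a (i+1) − 1, b i + 1}` is a non-edge of `G`, every vertex of `W_i` is adjacent to
both endpoints of `ε`, and every walk in `G` from `a (i+1) − 1` to `b i + 1` passes
through some vertex of `W_i`. -/
theorem nonedge_and_separation_of_connected_cutSet
    (n t : ℕ) (ht : 1 ≤ t) (G : SimpleGraph ℕ)
    (a b : ℕ → ℕ)
    (ha1 : a 1 = 1) (hbt : b t = n)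
    (hab : ∀ i ∈ Set.Icc 1 t, a i ≤ b i)
    (hamono : StrictMonoOn a (Set.Icc 1 t))
    (hbmono : StrictMonoOn b (Set.Icc 1 t))
    (hoverlap : ∀ i : ℕ, 1 ≤ i → i < t → a (i + 1) ≤ b i)
    (hadj : ∀ u v : ℕ, G.Adj u v ↔
      u ≠ v ∧ ∃ i ∈ Set.Icc 1 t, u ∈ Set.Icc (a i) (b i) ∧ v ∈ Set.Icc (a i) (b i))
    (i : ℕ) (hi1 : 1 ≤ i) (hit : i < t) :
    ¬ G.Adj (a (i + 1) - 1) (b i + 1) ∧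
    (∀ w ∈ Set.Icc (a (i + 1)) (b i),
      G.Adj w (a (i + 1) - 1) ∧ G.Adj w (b i + 1)) ∧
    (∀ p : G.Walk (a (i + 1) - 1) (b i + 1),
      ∃ w ∈ p.support, w ∈ Set.Icc (a (i + 1)) (b i)) :=
  nonedge_and_separation_of_connected_cutSet_general t G a b hamono hbmono hoverlap hadj i hi1 hit
end

section
/- Let G be a connected closed graph on [n] with maximal cliques F_i = [a_i, b_i] as above, and let W_i = F_i ∩ F_{i+1}. Let v_1, v_2 be distinct neighbors of the vertex a_{i+1} − 1 in G with v_1, v_2 ∉ W_i. Then v_1, v_2 ≤ b_i and {v_1, v_2} ∈ E(G). Symmetrically, any two distinct neighbors of b_i + 1 not in W_i are adjacent in G. -/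
/-!
Write `F j = [a j, b j]`. A clique containing `x = a (i+1) - 1` has index at most `i`, so every
neighbour of `x` is at most `b i`; outside `W_i` it is therefore below `a (i+1)`, i.e. at most `x`.
Two vertices `v, w ≤ x` sharing intervals `F j ∋ x, v` and `F l ∋ x, w` with `j ≤ l` both lie
in `F j`, since `a j ≤ a l ≤ w ≤ x ≤ b j`. The case of `b i + 1` is the mirror image.
-/

/-- Apart from `u ≠ v`, adjacency in the closed graph whose maximal cliques are the `[a j, b j]`. -/
def SharesInterval (a b : ℕ → ℕ) (s : Set ℕ) (u v : ℕ) : Prop :=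
  ∃ j ∈ s, u ∈ Set.Icc (a j) (b j) ∧ v ∈ Set.Icc (a j) (b j)

namespace SharesInterval

variable {a b : ℕ → ℕ} {s : Set ℕ} {x v w k : ℕ}

theorem of_le_of_le (ha : MonotoneOn a s) (hv : SharesInterval a b s x v)
    (hw : SharesInterval a b s x w) (hvx : v ≤ x) (hwx : w ≤ x) : SharesInterval a b s v w := by
  obtain ⟨j, hj, hxj, hvj⟩ := hv
  obtain ⟨l, hl, hxl, hwl⟩ := hw
  rcases le_total j l with hjl | hlj
  · exact ⟨j, hj, hvj, (ha hj hl hjl).trans hwl.1, hwx.trans hxj.2⟩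
  · exact ⟨l, hl, ⟨(ha hl hj hlj).trans hvj.1, hvx.trans hxl.2⟩, hwl⟩

theorem of_ge_of_ge (hb : MonotoneOn b s) (hv : SharesInterval a b s x v)
    (hw : SharesInterval a b s x w) (hxv : x ≤ v) (hxw : x ≤ w) : SharesInterval a b s v w := by
  obtain ⟨j, hj, hxj, hvj⟩ := hv
  obtain ⟨l, hl, hxl, hwl⟩ := hw
  rcases le_total j l with hjl | hlj
  · exact ⟨l, hl, ⟨hxl.1.trans hxv, hvj.2.trans (hb hj hl hjl)⟩, hwl⟩
  · exact ⟨j, hj, hvj, hxj.1.trans hxw, hwl.2.trans (hb hl hj hlj)⟩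

theorem le_of_lt (ha : MonotoneOn a s) (hb : MonotoneOn b s) (hk : k ∈ s) (hk1 : k + 1 ∈ s)
    (hx : x < a (k + 1)) (hv : SharesInterval a b s x v) : v ≤ b k := by
  obtain ⟨j, hj, hxj, hvj⟩ := hv
  have hjk : j ≤ k := by
    by_contra! hkj
    exact (hx.trans_le (ha hk1 hj hkj)).not_ge hxj.1
  exact hvj.2.trans (hb hj hk hjk)

theorem ge_of_gt (ha : MonotoneOn a s) (hb : MonotoneOn b s) (hk : k ∈ s) (hk1 : k + 1 ∈ s)
    (hx : b k < x) (hv : SharesInterval a b s x v) : a (k + 1) ≤ v := by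
  obtain ⟨j, hj, hxj, hvj⟩ := hv
  have hkj : k + 1 ≤ j := by
    by_contra! hjk
    exact (hxj.2.trans (hb hj hk (Nat.lt_succ_iff.mp hjk))).not_gt hx
  exact (ha hk1 hj hkj).trans hvj.1

theorem lt_of_lt_of_notMem (ha : MonotoneOn a s) (hb : MonotoneOn b s) (hk : k ∈ s)
    (hk1 : k + 1 ∈ s) (hx : x < a (k + 1)) (hv : SharesInterval a b s x v)
    (hvW : v ∉ Set.Icc (a (k + 1)) (b k)) : v < a (k + 1) :=
  lt_of_not_ge fun h => hvW ⟨h, hv.le_of_lt ha hb hk hk1 hx⟩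

theorem gt_of_gt_of_notMem (ha : MonotoneOn a s) (hb : MonotoneOn b s) (hk : k ∈ s)
    (hk1 : k + 1 ∈ s) (hx : b k < x) (hv : SharesInterval a b s x v)
    (hvW : v ∉ Set.Icc (a (k + 1)) (b k)) : b k < v :=
  lt_of_not_ge fun h => hvW ⟨hv.ge_of_gt ha hb hk hk1 hx, h⟩

end SharesInterval

theorem neighbors_outside_cutSet_adjacent_general
    (t : ℕ) (G : SimpleGraph ℕ)
    (a b : ℕ → ℕ)
    (hamono : StrictMonoOn a (Set.Icc 1 t))
    (hbmono : StrictMonoOn b (Set.Icc 1 t))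
    (hadj : ∀ u v : ℕ, G.Adj u v ↔
      u ≠ v ∧ ∃ i ∈ Set.Icc 1 t, u ∈ Set.Icc (a i) (b i) ∧ v ∈ Set.Icc (a i) (b i))
    (i : ℕ) (hi1 : 1 ≤ i) (hit : i < t) :
    (∀ v₁ v₂ : ℕ, v₁ ≠ v₂ →
      G.Adj (a (i + 1) - 1) v₁ → G.Adj (a (i + 1) - 1) v₂ →
      v₁ ∉ Set.Icc (a (i + 1)) (b i) → v₂ ∉ Set.Icc (a (i + 1)) (b i) →
      v₁ ≤ b i ∧ v₂ ≤ b i ∧ G.Adj v₁ v₂) ∧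
    (∀ v₁ v₂ : ℕ, v₁ ≠ v₂ →
      G.Adj (b i + 1) v₁ → G.Adj (b i + 1) v₂ →
      v₁ ∉ Set.Icc (a (i + 1)) (b i) → v₂ ∉ Set.Icc (a (i + 1)) (b i) →
      G.Adj v₁ v₂) := by
  have hi : i ∈ Set.Icc 1 t := ⟨hi1, hit.le⟩
  have hi' : i + 1 ∈ Set.Icc 1 t := ⟨by omega, hit⟩
  have ha := hamono.monotoneOn
  have hb := hbmono.monotoneOn
  have hadj' : ∀ u v, G.Adj u v ↔ u ≠ v ∧ SharesInterval a b (Set.Icc 1 t) u v := hadj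
  refine ⟨fun v₁ v₂ hne h₁ h₂ hW₁ hW₂ => ?_, fun v₁ v₂ hne h₁ h₂ hW₁ hW₂ => ?_⟩
  · -- `a (i + 1) - 1` does not truncate, as `a i < a (i + 1)`
    have hx : a (i + 1) - 1 < a (i + 1) := by have := hamono hi hi' i.lt_succ_self; omega
    obtain ⟨-, hv₁⟩ := (hadj' _ _).1 h₁
    obtain ⟨-, hv₂⟩ := (hadj' _ _).1 h₂
    have hlt₁ := hv₁.lt_of_lt_of_notMem ha hb hi hi' hx hW₁
    have hlt₂ := hv₂.lt_of_lt_of_notMem ha hb hi hi' hx hW₂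
    exact ⟨hv₁.le_of_lt ha hb hi hi' hx, hv₂.le_of_lt ha hb hi hi' hx,
      (hadj' _ _).2 ⟨hne, hv₁.of_le_of_le ha hv₂ (by omega) (by omega)⟩⟩
  · have hx : b i < b i + 1 := Nat.lt_succ_self _
    obtain ⟨-, hv₁⟩ := (hadj' _ _).1 h₁
    obtain ⟨-, hv₂⟩ := (hadj' _ _).1 h₂
    have hgt₁ := hv₁.gt_of_gt_of_notMem ha hb hi hi' hx hW₁
    have hgt₂ := hv₂.gt_of_gt_of_notMem ha hb hi hi' hx hW₂
    exact (hadj' _ _).2 ⟨hne, hv₁.of_ge_of_ge hb hv₂ hgt₁ hgt₂⟩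

/-- For a connected closed graph `G` on `[1,n]` with maximal cliques the intervals
`[a i, b i]` and `W_i = [a (i+1), b i]`: any two distinct neighbors `v₁, v₂` of
`a (i+1) − 1` not lying in `W_i` satisfy `v₁, v₂ ≤ b i` and are adjacent; symmetrically,
any two distinct neighbors of `b i + 1` not in `W_i` are adjacent. -/
theorem neighbors_outside_cutSet_adjacent
    (n t : ℕ) (ht : 1 ≤ t) (G : SimpleGraph ℕ)
    (a b : ℕ → ℕ)
    (ha1 : a 1 = 1) (hbt : b t = n)
    (hab : ∀ i ∈ Set.Icc 1 t, a i ≤ b i)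
    (hamono : StrictMonoOn a (Set.Icc 1 t))
    (hbmono : StrictMonoOn b (Set.Icc 1 t))
    (hoverlap : ∀ i : ℕ, 1 ≤ i → i < t → a (i + 1) ≤ b i)
    (hadj : ∀ u v : ℕ, G.Adj u v ↔
      u ≠ v ∧ ∃ i ∈ Set.Icc 1 t, u ∈ Set.Icc (a i) (b i) ∧ v ∈ Set.Icc (a i) (b i))
    (i : ℕ) (hi1 : 1 ≤ i) (hit : i < t) :
    (∀ v₁ v₂ : ℕ, v₁ ≠ v₂ →
      G.Adj (a (i + 1) - 1) v₁ → G.Adj (a (i + 1) - 1) v₂ →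
      v₁ ∉ Set.Icc (a (i + 1)) (b i) → v₂ ∉ Set.Icc (a (i + 1)) (b i) →
      v₁ ≤ b i ∧ v₂ ≤ b i ∧ G.Adj v₁ v₂) ∧
    (∀ v₁ v₂ : ℕ, v₁ ≠ v₂ →
      G.Adj (b i + 1) v₁ → G.Adj (b i + 1) v₂ →
      v₁ ∉ Set.Icc (a (i + 1)) (b i) → v₂ ∉ Set.Icc (a (i + 1)) (b i) →
      G.Adj v₁ v₂) :=
  neighbors_outside_cutSet_adjacent_general t G a b hamono hbmono hadj i hi1 hit
end

section
/- Let G be a path graph on [n] and T a cut set of G (a subset of {2,…,n−1} with no two consecutive elements). Let in(J) = (x_{1,i}x_{2,i+1} : 1 ≤ i ≤ n−1) and let in(P_T) be the initial ideal of the associated prime P_T(K_2,G), which is generated by {x_{1,j}, x_{2,j} : j ∈ T} together with {x_{1,u}x_{2,v} : u < v in the same connected component of G \ T}. Then every monomial h in (in(J) : in(P_T)) \ in(J) is divisible, for each v ∈ T, by x_{1,v−1}x_{2,v+1}, and for each vertex u that is an internal vertex of G \ T adjacent (in the component of G \ T containing it) to vertices on both sides, by x_{1,u} or x_{2,u}; consequently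 deg(h) ≥ 2|T| + Σ_c (|c| − 2), where the sum runs over the connected components c of G \ T with at least 3 vertices counting their internal vertices. -/
/-!
If `m ∉ in(J)` but `m * g ∈ in(J)` for a monomial `g`, then `m * g` is divisible by some
`x_{1,i} x_{2,i+1}` that does not divide `m`, so `g` supplies one of these two variables and `m`
must contain the other one. Applied to the generators `x_{2,v}`, `x_{1,v}`
(`v ∈ T`) and `x_{1,u-1} x_{2,u+1}` (`u` internal) of `in(P_T)`, this forces `x_{1,v-1}`,
`x_{2,v+1}`, and `x_{1,u}` or `x_{2,u}` to divide `m`. These variables are pairwise distinct,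
which gives the degree bound.
-/

open MvPolynomial Finset

theorem Finsupp.single_one_add_single_one_le_iff {σ : Type*} {a b : σ} (hab : a ≠ b)
    {d : σ →₀ ℕ} : single a 1 + single b 1 ≤ d ↔ d a ≠ 0 ∧ d b ≠ 0 := by
  classical
  rw [Finsupp.le_iff]
  simp [Finsupp.support_single_add_single hab one_ne_zero one_ne_zero, Finsupp.single_apply, hab,
    hab.symm, Nat.one_le_iff_ne_zero]

theorem Finsupp.card_le_degree_of_subset_support {σ : Type*} {d : σ →₀ ℕ} {S : Finset σ}
    (h : S ⊆ d.support) : #S ≤ d.degree :=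
  calc #S ≤ #d.support := card_le_card h
    _ ≤ d.degree := by
      simpa [Finsupp.degree_apply] using card_nsmul_le_sum d.support d 1 fun i hi =>
        Nat.one_le_iff_ne_zero.2 (Finsupp.mem_support_iff.1 hi)

theorem MvPolynomial.X_mul_X_eq_monomial {σ R : Type*} [CommSemiring R] (a b : σ) :
    (X a * X b : MvPolynomial σ R) = monomial (Finsupp.single a 1 + Finsupp.single b 1) 1 := by
  rw [X, X, monomial_mul, one_mul]

section PathInitialIdeal

variable (R : Type*) [CommSemiring R]

/-- `in(J_{K_2,P_n})`, the variable `x_{a,i}` being `X (a, i)`. -/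
noncomputable def pathInitialIdeal (n : ℕ) : Ideal (MvPolynomial (ℕ × ℕ) R) :=
  Ideal.span {f | ∃ i : ℕ, 1 ≤ i ∧ i + 1 ≤ n ∧ f = X (1, i) * X (2, i + 1)}

variable {R} [Nontrivial R] {n : ℕ} {d : (ℕ × ℕ) →₀ ℕ}

namespace pathInitialIdeal

theorem monomial_one_mem_iff :
    monomial d (1 : R) ∈ pathInitialIdeal R n ↔
      ∃ i, 1 ≤ i ∧ i + 1 ≤ n ∧ d (1, i) ≠ 0 ∧ d (2, i + 1) ≠ 0 := by
  classical
  have hgens :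
      {f : MvPolynomial (ℕ × ℕ) R | ∃ i : ℕ, 1 ≤ i ∧ i + 1 ≤ n ∧ f = X (1, i) * X (2, i + 1)} =
        (fun m => monomial m 1) ''
          ((fun i => Finsupp.single (1, i) 1 + Finsupp.single (2, i + 1) 1) ''
            {i | 1 ≤ i ∧ i + 1 ≤ n}) := by
    ext f
    simp [X_mul_X_eq_monomial, eq_comm, and_assoc]
  rw [pathInitialIdeal, hgens, mem_ideal_span_monomial_image, support_monomial,
    if_neg one_ne_zero]
  simp [Finsupp.single_one_add_single_one_le_iff, and_assoc]

theorem exists_of_monomial_add_mem {e : (ℕ × ℕ) →₀ ℕ}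
    (hd : monomial d (1 : R) ∉ pathInitialIdeal R n)
    (hde : monomial (d + e) (1 : R) ∈ pathInitialIdeal R n) :
    ∃ i, (d + e) (1, i) ≠ 0 ∧ (d + e) (2, i + 1) ≠ 0 ∧ (d (1, i) = 0 ∨ d (2, i + 1) = 0) := by
  rw [monomial_one_mem_iff] at hd hde
  obtain ⟨i, hi, hin, h1, h2⟩ := hde
  exact ⟨i, h1, h2, by by_contra! h; exact hd ⟨i, hi, hin, h.1, h.2⟩⟩

theorem apply_one_pred_ne_zero_of_mul_X_mem {v : ℕ}
    (hd : monomial d (1 : R) ∉ pathInitialIdeal R n)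
    (h : monomial d 1 * X (2, v) ∈ pathInitialIdeal R n) : d (1, v - 1) ≠ 0 := by
  rw [X, monomial_mul, one_mul] at h
  obtain ⟨i, h1, h2, h3⟩ := exists_of_monomial_add_mem hd h
  simp only [Finsupp.add_apply, Finsupp.single_apply, Prod.mk.injEq] at h1 h2
  split_ifs at h1 h2 <;> grind

theorem apply_two_succ_ne_zero_of_mul_X_mem {v : ℕ}
    (hd : monomial d (1 : R) ∉ pathInitialIdeal R n)
    (h : monomial d 1 * X (1, v) ∈ pathInitialIdeal R n) : d (2, v + 1) ≠ 0 := by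
  rw [X, monomial_mul, one_mul] at h
  obtain ⟨i, h1, h2, h3⟩ := exists_of_monomial_add_mem hd h
  simp only [Finsupp.add_apply, Finsupp.single_apply, Prod.mk.injEq] at h1 h2
  split_ifs at h1 h2 <;> grind

theorem apply_ne_zero_of_mul_X_mul_X_mem {u : ℕ}
    (hd : monomial d (1 : R) ∉ pathInitialIdeal R n)
    (hu : 1 ≤ u) (h : monomial d 1 * (X (1, u - 1) * X (2, u + 1)) ∈ pathInitialIdeal R n) :
    d (1, u) ≠ 0 ∨ d (2, u) ≠ 0 := by
  rw [X_mul_X_eq_monomial, monomial_mul, one_mul] at h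
  obtain ⟨i, h1, h2, h3⟩ := exists_of_monomial_add_mem hd h
  simp only [Finsupp.add_apply, Finsupp.single_apply, Prod.mk.injEq] at h1 h2
  split_ifs at h1 h2 <;> grind

end pathInitialIdeal

end PathInitialIdeal

theorem two_mul_card_add_card_le_degree {T I : Finset ℕ} {d : (ℕ × ℕ) →₀ ℕ}
    (hT : ∀ v ∈ T, 1 ≤ v ∧ d (1, v - 1) ≠ 0 ∧ d (2, v + 1) ≠ 0)
    (hI : ∀ u ∈ I, u - 1 ∉ T ∧ u + 1 ∉ T ∧ (d (1, u) ≠ 0 ∨ d (2, u) ≠ 0)) :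
    2 * #T + #I ≤ d.degree := by
  let row : ℕ → ℕ := fun u => if d (1, u) ≠ 0 then 1 else 2
  let A := T.image fun v => (1, v - 1)
  let B := T.image fun v => (2, v + 1)
  let C := I.image fun u => (row u, u)
  have hA : #A = #T := card_image_of_injOn fun v hv w hw h => by
    have := (hT v hv).1; have := (hT w hw).1
    simp only [Prod.mk.injEq, true_and] at h; omega
  have hB : #B = #T := card_image_of_injective _ fun v w h => by simpa using h
  have hC : #C = #I := card_image_of_injective _ fun u w h => congrArg Prod.snd h
  have hAB : Disjoint A B := by simp [A, B, disjoint_left]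
  have hABC : Disjoint (A ∪ B) C := by
    simp only [A, B, C, disjoint_left, mem_union, mem_image, not_exists, not_and]
    rintro _ (⟨v, hv, rfl⟩ | ⟨v, hv, rfl⟩) u hu h <;> simp only [Prod.mk.injEq] at h
    · exact (hI u hu).2.1 (by have := (hT v hv).1; rwa [show u + 1 = v by omega])
    · exact (hI u hu).1 (by rwa [show u - 1 = v by omega])
  have hsupp : A ∪ B ∪ C ⊆ d.support := by
    simp only [A, B, C, union_subset_iff, image_subset_iff, Finsupp.mem_support_iff]
    refine ⟨⟨fun v hv => (hT v hv).2.1, fun v hv => (hT v hv).2.2⟩, fun u hu => ?_⟩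
    by_cases h : d (1, u) = 0
    · simpa [row, h] using (hI u hu).2.2
    · simp [row, h]
  calc 2 * #T + #I = #(A ∪ B ∪ C) := by
        rw [card_union_of_disjoint hABC, card_union_of_disjoint hAB, hA, hB, hC, two_mul]
    _ ≤ d.degree := Finsupp.card_le_degree_of_subset_support hsupp

theorem initial_colon_monomial_divisibility_and_degree_general
    (K : Type*) [Field K] (n : ℕ)
    (T : Finset ℕ) (hTsub : T ⊆ Finset.Icc 2 (n - 1))
    (inJ inPT : Ideal (MvPolynomial (ℕ × ℕ) K))
    (hinJ : inJ = Ideal.span {f | ∃ i : ℕ, 1 ≤ i ∧ i + 1 ≤ n ∧ f = X (1, i) * X (2, i + 1)})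
    (hinPT : inPT = Ideal.span
      ({f | ∃ j ∈ T, f = X (1, j)} ∪ {f | ∃ j ∈ T, f = X (2, j)} ∪
       {f | ∃ u v : ℕ, u < v ∧ u ∈ Finset.Icc 1 n ∧ v ∈ Finset.Icc 1 n ∧
         u ∉ T ∧ v ∉ T ∧ (∀ w ∈ T, ¬ (u < w ∧ w < v)) ∧ f = X (1, u) * X (2, v)})) :
    ∀ d : (ℕ × ℕ) →₀ ℕ,
      (monomial d (1 : K)) ∈ Submodule.colon inJ inPT →
      (monomial d (1 : K)) ∉ inJ →
      (∀ v ∈ T, (X (1, v - 1) * X (2, v + 1) : MvPolynomial (ℕ × ℕ) K) ∣ monomial d 1) ∧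
      (∀ u : ℕ, 2 ≤ u → u + 1 ≤ n → u ∉ T → u - 1 ∉ T → u + 1 ∉ T →
        ((X (1, u) : MvPolynomial (ℕ × ℕ) K) ∣ monomial d 1 ∨
         (X (2, u) : MvPolynomial (ℕ × ℕ) K) ∣ monomial d 1)) ∧
      2 * T.card +
          ((Finset.Icc 2 (n - 1)).filter
            (fun u => u ∉ T ∧ u - 1 ∉ T ∧ u + 1 ∉ T)).card ≤
        d.sum fun _ e => e := by
  intro d hcolon hd
  change inJ = pathInitialIdeal K n at hinJ
  subst hinJ
  have hmul : ∀ g ∈ inPT, monomial d 1 * g ∈ pathInitialIdeal K n :=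
    Submodule.mem_colon.mp hcolon
  subst hinPT
  have hT : ∀ v ∈ T, 1 ≤ v ∧ d (1, v - 1) ≠ 0 ∧ d (2, v + 1) ≠ 0 := fun v hv =>
    ⟨by have := mem_Icc.mp (hTsub hv); omega,
      pathInitialIdeal.apply_one_pred_ne_zero_of_mul_X_mem hd
        (hmul _ (Ideal.subset_span (Or.inl (Or.inr ⟨v, hv, rfl⟩)))),
      pathInitialIdeal.apply_two_succ_ne_zero_of_mul_X_mem hd
        (hmul _ (Ideal.subset_span (Or.inl (Or.inl ⟨v, hv, rfl⟩))))⟩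
  have hI : ∀ u, 2 ≤ u → u + 1 ≤ n → u ∉ T → u - 1 ∉ T → u + 1 ∉ T →
      d (1, u) ≠ 0 ∨ d (2, u) ≠ 0 := fun u hu hun huT hu₁ hu₂ =>
    pathInitialIdeal.apply_ne_zero_of_mul_X_mul_X_mem hd (by omega) <| hmul _ <|
      Ideal.subset_span <| Or.inr ⟨u - 1, u + 1, by omega, mem_Icc.2 ⟨by omega, by omega⟩,
        mem_Icc.2 ⟨by omega, hun⟩, hu₁, hu₂,
        fun w hw hw' => huT (by rwa [show u = w by omega]), rfl⟩
  refine ⟨fun v hv => ?_, fun u hu hun huT hu₁ hu₂ => ?_, ?_⟩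
  · rw [X_mul_X_eq_monomial, monomial_one_dvd_monomial_one,
      Finsupp.single_one_add_single_one_le_iff (by simp)]
    exact (hT v hv).2
  · simpa using hI u hu hun huT hu₁ hu₂
  · refine two_mul_card_add_card_le_degree hT fun u hu => ?_
    obtain ⟨hu, huT, hu₁, hu₂⟩ := mem_filter.mp hu
    have := mem_Icc.mp hu
    exact ⟨hu₁, hu₂, hI u (by omega) (by omega) huT hu₁ hu₂⟩

/-- Lemma 6.4: divisibility constraints and degree bound for monomials in
`(in(J) : in(P_T)) \ in(J)`, where `in(J)` is the initial ideal of the binomial edge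
ideal of the path `P_n` and `in(P_T)` the initial ideal of the associated prime `P_T`. -/
theorem initial_colon_monomial_divisibility_and_degree
    (K : Type*) [Field K] (n : ℕ) (hn : 2 ≤ n)
    (T : Finset ℕ) (hTsub : T ⊆ Finset.Icc 2 (n - 1))
    (hTgap : ∀ j ∈ T, j + 1 ∉ T)
    (inJ inPT : Ideal (MvPolynomial (ℕ × ℕ) K))
    (hinJ : inJ = Ideal.span {f | ∃ i : ℕ, 1 ≤ i ∧ i + 1 ≤ n ∧ f = X (1, i) * X (2, i + 1)})
    (hinPT : inPT = Ideal.span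
      ({f | ∃ j ∈ T, f = X (1, j)} ∪ {f | ∃ j ∈ T, f = X (2, j)} ∪
       {f | ∃ u v : ℕ, u < v ∧ u ∈ Finset.Icc 1 n ∧ v ∈ Finset.Icc 1 n ∧
         u ∉ T ∧ v ∉ T ∧ (∀ w ∈ T, ¬ (u < w ∧ w < v)) ∧ f = X (1, u) * X (2, v)})) :
    ∀ d : (ℕ × ℕ) →₀ ℕ,
      (monomial d (1 : K)) ∈ Submodule.colon inJ inPT →
      (monomial d (1 : K)) ∉ inJ →
      (∀ v ∈ T, (X (1, v - 1) * X (2, v + 1) : MvPolynomial (ℕ × ℕ) K) ∣ monomial d 1) ∧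
      (∀ u : ℕ, 2 ≤ u → u + 1 ≤ n → u ∉ T → u - 1 ∉ T → u + 1 ∉ T →
        ((X (1, u) : MvPolynomial (ℕ × ℕ) K) ∣ monomial d 1 ∨
         (X (2, u) : MvPolynomial (ℕ × ℕ) K) ∣ monomial d 1)) ∧
      2 * T.card +
          ((Finset.Icc 2 (n - 1)).filter
            (fun u => u ∉ T ∧ u - 1 ∉ T ∧ u + 1 ∉ T)).card ≤
        d.sum fun _ e => e :=
  initial_colon_monomial_divisibility_and_degree_general K n T hTsub inJ inPT hinJ hinPT
end
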